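/- arXiv:1305.6756 — 6 statements merged into one kernel-verified Lean document; each statement's English description precedes it below -/
import Mathlib

section
/- Let n ≥ 3 and let l : Fin n → ℝ be positive and satisfy the polygon inequality (for every i, l i ≤ ∑_{j ≠ i} l j). Then there exists a configuration P : Fin n → ℝ² of l (dist (P i) (P (i+1 mod n)) = l i for all i) whose image is contained in an affine line of ℝ² if and only if there exists a nonempty proper subset I ⊊ Fin n with ∑_{i ∈ I} l i = ∑_{i ∉ I} l i. Consequently, a linkage is generic (no such subset I exists) if and only if it is impossible to put all its vertices on a straight line. -/
/-!
Placing the vertices on a line turns each edge into a signed length `d i` with `|d i| = l i`,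
and closing the polygon forces `∑ i, d i = 0`; conversely the partial sums of such a `d` lay
the polygon out along any line. A sign pattern with `∑ i, d i = 0` is the same as a splitting
subset `I = {i | 0 < d i}`, which is nonempty and proper because the `l i` are positive.
-/

open Finset

namespace Fin

theorem sum_univ_comp_add_one {M : Type*} [AddCommMonoid M] {n : ℕ} [NeZero n]
    (f : Fin n → M) : ∑ i, f (i + 1) = ∑ i, f i :=
  Equiv.sum_comp (Equiv.addRight 1) f

theorem partialSum_last {M : Type*} [AddCommMonoid M] {n : ℕ} (f : Fin n → M) :
    partialSum f (last n) = ∑ i, f i := by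
  rw [partialSum, val_last, List.take_of_length_le (by simp), List.sum_ofFn]

theorem exists_forall_add_one_sub_eq_of_sum_eq_zero {M : Type*} [AddCommGroup M] {n : ℕ}
    [NeZero n] (d : Fin n → M) (hd : ∑ i, d i = 0) :
    ∃ s : Fin n → M, ∀ i, s (i + 1) - s i = d i := by
  obtain ⟨m, rfl⟩ := Nat.exists_eq_succ_of_ne_zero (NeZero.ne n)
  refine ⟨fun i => partialSum d i.castSucc, fun i => ?_⟩
  induction i using lastCases with
  | last =>
    have hclose := partialSum_succ d (last m)
    rw [succ_last, partialSum_last, hd] at hclose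
    simpa [last_add_one] using neg_eq_of_add_eq_zero_right hclose.symm
  | cast i =>
    simp [coeSucc_eq_succ, partialSum_succ]

end Fin

theorem Collinear.exists_abs_eq_dist_add_one_and_sum_eq_zero {V P : Type*}
    [NormedAddCommGroup V] [NormedSpace ℝ V] [MetricSpace P] [NormedAddTorsor V P]
    {n : ℕ} [NeZero n] {p : Fin n → P} (h : Collinear ℝ (Set.range p)) :
    ∃ d : Fin n → ℝ, (∀ i, |d i| = dist (p i) (p (i + 1))) ∧ ∑ i, d i = 0 := by
  obtain ⟨p₀, v, hv⟩ := (collinear_iff_exists_forall_eq_smul_vadd _).1 h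
  choose r hr using fun i => hv (p i) ⟨i, rfl⟩
  refine ⟨fun i => (r (i + 1) - r i) * ‖v‖, fun i => ?_, ?_⟩
  · rw [hr i, hr (i + 1), dist_vadd_cancel_right, dist_eq_norm, ← sub_smul, norm_smul,
      Real.norm_eq_abs, abs_mul, abs_norm, abs_sub_comm]
  · rw [← sum_mul, sum_sub_distrib, Fin.sum_univ_comp_add_one, sub_self, zero_mul]

theorem exists_collinear_dist_add_one_eq_iff {V : Type*} [NormedAddCommGroup V]
    [NormedSpace ℝ V] [Nontrivial V] {n : ℕ} [NeZero n] (l : Fin n → ℝ) :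
    (∃ p : Fin n → V, (∀ i, dist (p i) (p (i + 1)) = l i) ∧ Collinear ℝ (Set.range p)) ↔
      ∃ d : Fin n → ℝ, (∀ i, |d i| = l i) ∧ ∑ i, d i = 0 := by
  constructor
  · rintro ⟨p, hp, hcol⟩
    obtain ⟨d, hd, hsum⟩ := hcol.exists_abs_eq_dist_add_one_and_sum_eq_zero
    exact ⟨d, fun i => (hd i).trans (hp i), hsum⟩
  · rintro ⟨d, hd, hsum⟩
    obtain ⟨s, hs⟩ := Fin.exists_forall_add_one_sub_eq_of_sum_eq_zero d hsum
    obtain ⟨v, hv⟩ := exists_norm_eq V zero_le_one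
    refine ⟨fun i => s i • v, fun i => ?_, ?_⟩
    · rw [dist_eq_norm, ← sub_smul, norm_smul, hv, mul_one, Real.norm_eq_abs, abs_sub_comm,
        hs, hd]
    · refine (collinear_iff_exists_forall_eq_smul_vadd _).2 ⟨0, v, ?_⟩
      rintro _ ⟨i, rfl⟩
      exact ⟨s i, by simp⟩

theorem exists_sum_eq_sum_compl_iff_exists_abs_eq_and_sum_eq_zero {ι : Type*} [Fintype ι]
    [DecidableEq ι] [Nonempty ι] {l : ι → ℝ} (hl : ∀ i, 0 < l i) :
    (∃ I : Finset ι, I.Nonempty ∧ I ≠ univ ∧ ∑ i ∈ I, l i = ∑ i ∈ Iᶜ, l i) ↔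
      ∃ d : ι → ℝ, (∀ i, |d i| = l i) ∧ ∑ i, d i = 0 := by
  constructor
  · rintro ⟨I, -, -, hI⟩
    refine ⟨fun i => if i ∈ I then l i else -l i, fun i => ?_, ?_⟩
    · by_cases hi : i ∈ I <;> simp [hi, abs_of_pos (hl i)]
    · rw [← sum_add_sum_compl I, ← sub_eq_zero.2 hI, sub_eq_add_neg, ← sum_neg_distrib]
      congr 1 <;> refine sum_congr rfl fun i hi => ?_ <;> simp_all
  · rintro ⟨d, hd, hsum⟩
    set I := univ.filter fun i => 0 < d i
    have hl_I : ∀ i ∈ I, l i = d i := fun i hi => by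
      rw [← hd, abs_of_pos (mem_filter.1 hi).2]
    have hl_Ic : ∀ i ∈ Iᶜ, l i = -d i := fun i hi => by
      rw [← hd, abs_of_nonpos]
      simpa [I] using hi
    have hI : ∑ i ∈ I, l i = ∑ i ∈ Iᶜ, l i := by
      rw [sum_congr rfl hl_I, sum_congr rfl hl_Ic, sum_neg_distrib, eq_neg_iff_add_eq_zero,
        sum_add_sum_compl, hsum]
    have hpos : 0 < ∑ i, l i := sum_pos (fun i _ => hl i) univ_nonempty
    refine ⟨I, nonempty_iff_ne_empty.2 fun h => ?_, fun h => ?_, hI⟩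
    · rw [h, compl_empty, sum_empty] at hI
      linarith
    · rw [h, compl_univ, sum_empty] at hI
      linarith

theorem collinear_configuration_exists_iff_splitting_subset_general
    (n : ℕ) [NeZero n] (l : Fin n → ℝ) (hl : ∀ i, 0 < l i) :
    ((∃ P : Fin n → EuclideanSpace ℝ (Fin 2),
        (∀ i, dist (P i) (P (i + 1)) = l i) ∧ Collinear ℝ (Set.range P)) ↔
      ∃ I : Finset (Fin n), I.Nonempty ∧ I ≠ Finset.univ ∧
        ∑ i ∈ I, l i = ∑ i ∈ Iᶜ, l i) ∧
    ((¬ ∃ I : Finset (Fin n), I.Nonempty ∧ I ≠ Finset.univ ∧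
        ∑ i ∈ I, l i = ∑ i ∈ Iᶜ, l i) ↔
      ¬ ∃ P : Fin n → EuclideanSpace ℝ (Fin 2),
        (∀ i, dist (P i) (P (i + 1)) = l i) ∧ Collinear ℝ (Set.range P)) := by
  have h := (exists_collinear_dist_add_one_eq_iff (V := EuclideanSpace ℝ (Fin 2)) l).trans
    (exists_sum_eq_sum_compl_iff_exists_abs_eq_and_sum_eq_zero hl).symm
  exact ⟨h, (not_congr h).symm⟩

/-- For `n ≥ 3` and positive `l : Fin n → ℝ` satisfying the polygon
inequality, there exists a configuration of the linkage all of whose vertices lie on a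
straight line (i.e. the range of `P` is collinear) iff there is a nonempty proper subset
`I ⊊ Fin n` with `∑_{i ∈ I} l i = ∑_{i ∉ I} l i`.  Consequently, the linkage is generic
(no such `I` exists) iff it is impossible to put all its vertices on a straight line. -/
theorem collinear_configuration_exists_iff_splitting_subset
    (n : ℕ) [NeZero n] (hn : 3 ≤ n) (l : Fin n → ℝ) (hl : ∀ i, 0 < l i)
    (hpoly : ∀ i, l i ≤ ∑ j ∈ Finset.univ.erase i, l j) :
    ((∃ P : Fin n → EuclideanSpace ℝ (Fin 2),
        (∀ i, dist (P i) (P (i + 1)) = l i) ∧ Collinear ℝ (Set.range P)) ↔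
      ∃ I : Finset (Fin n), I.Nonempty ∧ I ≠ Finset.univ ∧
        ∑ i ∈ I, l i = ∑ i ∈ Iᶜ, l i) ∧
    ((¬ ∃ I : Finset (Fin n), I.Nonempty ∧ I ≠ Finset.univ ∧
        ∑ i ∈ I, l i = ∑ i ∈ Iᶜ, l i) ↔
      ¬ ∃ P : Fin n → EuclideanSpace ℝ (Fin 2),
        (∀ i, dist (P i) (P (i + 1)) = l i) ∧ Collinear ℝ (Set.range P)) :=
  collinear_configuration_exists_iff_splitting_subset_general n l hl
end

section
/- Let n ≥ 3 and let l : Fin n → ℝ be positive and generic (no nonempty proper subset I ⊊ Fin n satisfies ∑_{i ∈ I} l i = ∑_{i ∉ I} l i). Let F : (Fin n → ℝ²) → (Fin n → ℝ) be the squared edge-length map F(P) i = ‖P (i+1 mod n) − P i‖². Then at every based configuration P (P 0 = 0, F(P) i = (l i)² for all i), the Fréchet derivative of the restriction of F to the subspace { Q : Fin n → ℝ² | Q 0 = 0 } is surjective onto Fin n → ℝ; that is, (l i)²_{i} is a regular value of this restricted map. -/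
/-- The subspace `{ Q : Fin n → ℂ | Q 0 = 0 }` of based tuples of points in the plane
(the plane `ℝ²` modeled as `ℂ`), as a real submodule of `Fin n → ℂ`. -/
noncomputable def basedSubspace (n : ℕ) [NeZero n] : Submodule ℝ (Fin n → ℂ) :=
  LinearMap.ker (LinearMap.proj (R := ℝ) (φ := fun _ : Fin n => ℂ) 0)

/-- The squared edge-length map `F : (Fin n → ℂ) → (Fin n → ℝ)`,
`F(P) i = ‖P (i+1) − P i‖²` (indices cyclic). -/
noncomputable def sqEdgeLengths (n : ℕ) [NeZero n] (P : Fin n → ℂ) : Fin n → ℝ :=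
  fun i => ‖P (i + 1) - P i‖ ^ 2

/-!
The derivative at `P` sends `V` to `(2⟪e i, V (i + 1) - V i⟫)ᵢ`, where `e i = P (i + 1) - P i`
are the edges. After summation by parts, a covector `c` annihilating its image pairs trivially
with every based `V` supported at a single vertex, which forces `c i • e i = z` for one vector `z`.
If `z ≠ 0`, every edge is a multiple of `z`; since the edges close up, the signed lengths `±l i`
sum to zero, and the signs split the edges into two parts of equal total length, which genericity
forbids. So `z = 0`, and then `c = 0` because no edge vanishes.
-/

open Finset
open scoped RealInnerProductSpace

theorem LinearMap.surjective_of_forall_sum_mul_eq_zero {K M ι : Type*} [Field K]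
    [AddCommGroup M] [Module K M] [Fintype ι] [DecidableEq ι] (A : M →ₗ[K] ι → K)
    (h : ∀ c : ι → K, (∀ v, ∑ i, c i * A v i = 0) → c = 0) : Function.Surjective A := by
  rw [← LinearMap.range_eq_top, ← Submodule.dualAnnihilator_eq_bot_iff, eq_bot_iff]
  intro f hf
  rw [Submodule.mem_dualAnnihilator] at hf
  have hc := h (fun i => f (Pi.single i 1)) fun v => by
    rw [← hf (A v) (LinearMap.mem_range_self A v), LinearMap.pi_apply_eq_sum_univ]
    refine sum_congr rfl fun i _ => ?_
    rw [mul_comm, smul_eq_mul]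
    congr 2
    funext j
    simp [Pi.single_apply, eq_comm]
  refine (Submodule.mem_bot K).2 (LinearMap.pi_ext fun i x => ?_)
  have hx : Pi.single i x = x • Pi.single i (1 : K) := by simp [← Pi.single_smul]
  rw [hx, map_smul, congrFun hc i]
  simp

theorem Fin.apply_eq_apply_zero_of_apply_add_one {n : ℕ} [NeZero n] {α : Type*}
    (f : Fin n → α) (h : ∀ i, i + 1 ≠ 0 → f (i + 1) = f i) (i : Fin n) : f i = f 0 := by
  obtain ⟨m, rfl⟩ : ∃ m, n = m + 1 := ⟨n - 1, (Nat.succ_pred_eq_of_ne_zero (NeZero.ne n)).symm⟩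
  induction i using Fin.induction with
  | zero => rfl
  | succ i ih =>
    rw [← Fin.coeSucc_eq_succ] at *
    rw [h _ (by simp [Fin.coeSucc_eq_succ]), ih]

theorem Fintype.sum_apply_add_sub_apply {G M : Type*} [AddGroup G] [Fintype G] [AddCommGroup M]
    (P : G → M) (g : G) : ∑ i, (P (i + g) - P i) = 0 := by
  rw [Finset.sum_sub_distrib, sub_eq_zero]
  exact Equiv.sum_comp (Equiv.addRight g) P

theorem Fintype.sum_inner_apply_add_sub_apply {G E : Type*} [AddGroup G] [Fintype G]
    [NormedAddCommGroup E] [InnerProductSpace ℝ E] (a V : G → E) (g : G) :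
    ∑ i, ⟪a i, V (i + g) - V i⟫ = ∑ i, ⟪a (i - g) - a i, V i⟫ := by
  simp only [inner_sub_left, inner_sub_right, Finset.sum_sub_distrib]
  rw [← (Equiv.subRight g).sum_comp fun i => ⟪a i, V (i + g)⟫]
  simp

theorem exists_balanced_of_sum_eq_zero {ι : Type*} [Fintype ι] [DecidableEq ι] [Nonempty ι]
    (l : ι → ℝ) (hl : ∀ i, 0 < l i) (s : ι → ℝ) (hs : ∀ i, |s i| = l i)
    (hsum : ∑ i, s i = 0) :
    ∃ I : Finset ι, I.Nonempty ∧ I ≠ univ ∧ ∑ i ∈ I, l i = ∑ i ∈ Iᶜ, l i := by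
  set I := univ.filter fun i => 0 < s i
  have hpos : ∑ i ∈ I, l i = ∑ i ∈ I, s i :=
    sum_congr rfl fun i hi => by rw [← hs i, abs_of_pos (mem_filter.1 hi).2]
  have hneg : ∑ i ∈ Iᶜ, l i = -∑ i ∈ Iᶜ, s i := by
    rw [← sum_neg_distrib]
    refine sum_congr rfl fun i hi => ?_
    rw [← hs i, abs_of_nonpos]
    simpa [I] using hi
  have hbal : ∑ i ∈ I, l i = ∑ i ∈ Iᶜ, l i := by
    rw [hpos, hneg, eq_neg_iff_add_eq_zero, sum_add_sum_compl, hsum]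
  have htot : 0 < ∑ i, l i := sum_pos (fun i _ => hl i) univ_nonempty
  refine ⟨I, nonempty_iff_ne_empty.2 fun h => ?_, fun h => ?_, hbal⟩
  · rw [h, sum_empty, compl_empty] at hbal
    linarith
  · rw [h, compl_univ, sum_empty] at hbal
    linarith

theorem eq_zero_of_forall_smul_eq {ι E : Type*} [Fintype ι] [DecidableEq ι] [Nonempty ι]
    [NormedAddCommGroup E] [NormedSpace ℝ E] (l : ι → ℝ) (hl : ∀ i, 0 < l i)
    (hgen : ¬ ∃ I : Finset ι, I.Nonempty ∧ I ≠ univ ∧ ∑ i ∈ I, l i = ∑ i ∈ Iᶜ, l i)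
    (e : ι → E) (he : ∀ i, ‖e i‖ = l i) (hsum : ∑ i, e i = 0)
    (c : ι → ℝ) (z : E) (hc : ∀ i, c i • e i = z) : c = 0 := by
  have he0 : ∀ i, e i ≠ 0 := fun i h => (hl i).ne' (by rw [← he i, h, norm_zero])
  by_cases hz : z = 0
  · funext i
    exact (smul_eq_zero.1 ((hc i).trans hz)).resolve_right (he0 i)
  refine absurd ?_ hgen
  have hc0 : ∀ i, c i ≠ 0 := fun i h => hz (by rw [← hc i, h, zero_smul])
  have hez : ∀ i, e i = (c i)⁻¹ • z := fun i => by rw [← hc i, inv_smul_smul₀ (hc0 i)]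
  refine exists_balanced_of_sum_eq_zero l hl (fun i => (c i)⁻¹ * ‖z‖) (fun i => ?_) ?_
  · rw [← he i, hez i, norm_smul, Real.norm_eq_abs, abs_mul, abs_norm]
  · have : (∑ i, (c i)⁻¹) • z = 0 := by
      rw [sum_smul, ← hsum]
      exact sum_congr rfl fun i _ => (hez i).symm
    rw [← sum_mul, (smul_eq_zero.1 this).resolve_right hz, zero_mul]

theorem Fin.smul_eq_of_forall_sum_mul_inner_eq_zero {n : ℕ} [NeZero n] {E : Type*}
    [NormedAddCommGroup E] [InnerProductSpace ℝ E] (e : Fin n → E) (c : Fin n → ℝ)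
    (h : ∀ V : Fin n → E, V 0 = 0 → ∑ i, c i * ⟪e i, V (i + 1) - V i⟫ = 0) (i : Fin n) :
    c i • e i = c 0 • e 0 := by
  refine Fin.apply_eq_apply_zero_of_apply_add_one (fun i => c i • e i) (fun i hi => ?_) i
  have horth : ∀ w, ⟪c i • e i - c (i + 1) • e (i + 1), w⟫ = 0 := fun w => by
    have := h (Pi.single (i + 1) w) (Pi.single_eq_of_ne (M := fun _ => E) hi.symm w)
    simp_rw [← real_inner_smul_left] at this
    rwa [Fintype.sum_inner_apply_add_sub_apply, Fintype.sum_eq_single (i + 1)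
      (fun j hj => by rw [Pi.single_eq_of_ne hj, inner_zero_right]),
      Pi.single_eq_same, add_sub_cancel_right] at this
  exact (sub_eq_zero.1 (inner_self_eq_zero.1 (horth _))).symm

theorem fderiv_sqEdgeLengths_apply (n : ℕ) [NeZero n] (P V : basedSubspace n) (i : Fin n) :
    fderiv ℝ (fun Q : basedSubspace n => sqEdgeLengths n Q.1) P V i =
      2 * ⟪P.1 (i + 1) - P.1 i, V.1 (i + 1) - V.1 i⟫ := by
  let edge (i : Fin n) : basedSubspace n →L[ℝ] ℂ :=
    (ContinuousLinearMap.proj (R := ℝ) (φ := fun _ : Fin n => ℂ) (i + 1) -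
      ContinuousLinearMap.proj i).comp (basedSubspace n).subtypeL
  have hD : HasFDerivAt (fun Q : basedSubspace n => sqEdgeLengths n Q.1)
      (ContinuousLinearMap.pi fun i => 2 • (innerSL ℝ (edge i P)).comp (edge i)) P :=
    hasFDerivAt_pi.2 fun i => (edge i).hasFDerivAt.norm_sq
  rw [hD.fderiv]
  simp only [ContinuousLinearMap.pi_apply, FunLike.coe_smul, Pi.smul_apply,
    ContinuousLinearMap.comp_apply, innerSL_apply_apply, nsmul_eq_mul, Nat.cast_ofNat]
  rfl

theorem generic_linkage_sq_edge_lengths_fderiv_surjective_general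
    (n : ℕ) [NeZero n] (l : Fin n → ℝ) (hl : ∀ i, 0 < l i)
    (hgen : ¬ ∃ I : Finset (Fin n), I.Nonempty ∧ I ≠ Finset.univ ∧
      ∑ i ∈ I, l i = ∑ i ∈ Iᶜ, l i)
    (P : basedSubspace n)
    (hP : ∀ i, sqEdgeLengths n P.1 i = (l i) ^ 2) :
    Function.Surjective
      (fderiv ℝ (fun Q : basedSubspace n => sqEdgeLengths n Q.1) P) := by
  set e : Fin n → ℂ := fun i => P.1 (i + 1) - P.1 i
  have he : ∀ i, ‖e i‖ = l i := fun i =>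
    (pow_left_inj₀ (norm_nonneg _) (hl i).le two_ne_zero).1 (hP i)
  refine LinearMap.surjective_of_forall_sum_mul_eq_zero _ fun c hc => ?_
  have hcV : ∀ V : Fin n → ℂ, V 0 = 0 → ∑ i, c i * ⟪e i, V (i + 1) - V i⟫ = 0 := fun V hV => by
    have := hc ⟨V, hV⟩
    simp only [ContinuousLinearMap.coe_coe, fderiv_sqEdgeLengths_apply] at this
    rw [← mul_eq_zero_iff_left two_ne_zero, mul_sum]
    simpa only [mul_left_comm] using this
  exact eq_zero_of_forall_smul_eq l hl hgen e he (Fintype.sum_apply_add_sub_apply P.1 1) c _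
    (Fin.smul_eq_of_forall_sum_mul_inner_eq_zero e c hcV)

/-- Let `n ≥ 3` and let `l : Fin n → ℝ` be positive and generic (no
nonempty proper subset `I ⊊ Fin n` satisfies `∑_{i ∈ I} l i = ∑_{i ∉ I} l i`).  Then at
every based configuration `P` (`P 0 = 0` and `F(P) i = (l i)²` for all `i`) the Fréchet
derivative of the restriction of the squared edge-length map `F` to the subspace
`{ Q | Q 0 = 0 }` is surjective onto `Fin n → ℝ`; i.e. `(l i)²` is a regular value of
this restricted map. -/
theorem generic_linkage_sq_edge_lengths_fderiv_surjective
    (n : ℕ) [NeZero n] (hn : 3 ≤ n) (l : Fin n → ℝ) (hl : ∀ i, 0 < l i)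
    (hgen : ¬ ∃ I : Finset (Fin n), I.Nonempty ∧ I ≠ Finset.univ ∧
      ∑ i ∈ I, l i = ∑ i ∈ Iᶜ, l i)
    (P : basedSubspace n)
    (hP : ∀ i, sqEdgeLengths n P.1 i = (l i) ^ 2) :
    Function.Surjective
      (fderiv ℝ (fun Q : basedSubspace n => sqEdgeLengths n Q.1) P) :=
  generic_linkage_sq_edge_lengths_fderiv_surjective_general n l hl hgen P hP
end

section
/- Let l : Fin 5 → ℝ be positive, satisfy the polygon inequality, and be generic. Then the moduli space M(l), realized as the slice S(l) = { P : Fin 5 → ℝ² | P 0 = 0, P 1 = (l 0, 0), dist (P i) (P (i+1 mod 5)) = l i for all i }, is a nonempty compact topological 2-manifold (a compact charted space over EuclideanSpace ℝ (Fin 2)). -/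
/-!
`S(l)` is the fibre over `(0, l₀, l₁², l₂², l₃², l₄²)` of the smooth map
`P ↦ (P₀, P₁, ‖P₂ - P₁‖², ‖P₃ - P₂‖², ‖P₄ - P₃‖², ‖P₀ - P₄‖²)` from `(ℝ²)⁵` to `ℝ⁸`; the length
of the edge `P₀P₁` is not a constraint, being fixed by `P₀` and `P₁`. The derivative of this map
at `P` is onto as soon as two consecutive edges among `P₁P₂, …, P₄P₀` are not parallel. If they
all were, the closed pentagon would lie on a line, and the signs of its edges along that line
would split `l` into two parts of equal sum, which genericity forbids. So the implicit function
theorem gives charts of `S(l)` onto open subsets of `ℝ²`. Compactness is closedness plus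
boundedness. For nonemptiness, the polygon inequality provides lengths `x`, `y` of the diagonals
`P₁P₃`, `P₃P₀` for which the triangles `P₀P₁P₃`, `P₁P₂P₃`, `P₃P₄P₀` exist.
-/

open Module Finset
open scoped RealInnerProductSpace

namespace OpenPartialHomeomorph

variable {X Y Z : Type*} [TopologicalSpace X] [TopologicalSpace Y] [TopologicalSpace Z]
  (φ : OpenPartialHomeomorph X (Y × Z)) {f : X → Y} (c : Y)

theorem symm_mk_mem_preimage_singleton (hf : ∀ x, (φ x).1 = f x) {z : Z}
    (hz : (c, z) ∈ φ.target) : φ.symm (c, z) ∈ f ⁻¹' {c} := by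
  rw [Set.mem_preimage, Set.mem_singleton_iff, ← hf, φ.right_inv hz]

theorem mk_snd_eq_self_of_mem_preimage_singleton (hf : ∀ x, (φ x).1 = f x) (p : f ⁻¹' {c}) :
    (c, (φ p).2) = φ p :=
  Prod.ext ((hf p).trans p.2).symm rfl

open Classical in
noncomputable def levelSetChart (hf : ∀ x, (φ x).1 = f x) (x₀ : f ⁻¹' {c}) :
    OpenPartialHomeomorph (f ⁻¹' {c}) Z where
  toFun p := (φ p).2
  invFun z :=
    if h : (c, z) ∈ φ.target then ⟨φ.symm (c, z), φ.symm_mk_mem_preimage_singleton c hf h⟩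
    else x₀
  source := Subtype.val ⁻¹' φ.source
  target := {z | (c, z) ∈ φ.target}
  map_source' p hp := by
    simpa [φ.mk_snd_eq_self_of_mem_preimage_singleton c hf p] using φ.map_source hp
  map_target' z (hz : (c, z) ∈ φ.target) := by
    simpa [dif_pos hz] using φ.map_target hz
  left_inv' p hp := by
    simp only [φ.mk_snd_eq_self_of_mem_preimage_singleton c hf p, dif_pos (φ.map_source hp),
      φ.left_inv hp]
  right_inv' z (hz : (c, z) ∈ φ.target) := by simp [dif_pos hz, φ.right_inv hz]
  open_source := φ.open_source.preimage continuous_subtype_val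
  open_target := φ.open_target.preimage (Continuous.prodMk_right c)
  continuousOn_toFun :=
    continuous_snd.comp_continuousOn (φ.continuousOn.comp continuous_subtype_val.continuousOn
      fun _ h => h)
  continuousOn_invFun := by
    rw [Topology.IsEmbedding.subtypeVal.continuousOn_iff]
    refine (φ.continuousOn_symm.comp (Continuous.prodMk_right c).continuousOn fun _ h => h).congr
      fun z (hz : (c, z) ∈ φ.target) => ?_
    simp [dif_pos hz]

end OpenPartialHomeomorph

theorem nonempty_chartedSpace_of_forall_exists_mem_source {H M : Type*} [TopologicalSpace H]
    [TopologicalSpace M] (h : ∀ x : M, ∃ e : OpenPartialHomeomorph M H, x ∈ e.source) :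
    Nonempty (ChartedSpace H M) := by
  choose e he using h
  exact ⟨⟨Set.range e, e, he, Set.mem_range_self⟩⟩

section Submersion

variable {E G : Type*} [NormedAddCommGroup E] [NormedSpace ℝ E] [FiniteDimensional ℝ E]
  [NormedAddCommGroup G] [NormedSpace ℝ G] [FiniteDimensional ℝ G]

theorem HasStrictFDerivAt.exists_chart_preimage_singleton {f : E → G} {f' : E →L[ℝ] G} {c : G}
    {n : ℕ} (x : f ⁻¹' {c}) (hf : HasStrictFDerivAt f f' x) (hf' : f'.range = ⊤)
    (hdim : finrank ℝ E = finrank ℝ G + n) :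
    ∃ e : OpenPartialHomeomorph (f ⁻¹' {c}) (EuclideanSpace ℝ (Fin n)), x ∈ e.source := by
  have : CompleteSpace E := FiniteDimensional.complete ℝ E
  have hker : finrank ℝ f'.ker = finrank ℝ (EuclideanSpace ℝ (Fin n)) := by
    have := LinearMap.finrank_range_add_finrank_ker (f' : E →ₗ[ℝ] G)
    rw [hf', finrank_top, hdim] at this
    rw [finrank_euclideanSpace_fin]
    exact Nat.add_left_cancel this
  let ι := (LinearEquiv.ofFinrankEq _ _ hker).toContinuousLinearEquiv
  exact ⟨((hf.implicitToOpenPartialHomeomorph f f' hf').levelSetChart c (fun _ => rfl) x)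
    |>.transHomeomorph ι.toHomeomorph, hf.mem_implicitToOpenPartialHomeomorph_source hf'⟩

theorem nonempty_chartedSpace_preimage_singleton {f : E → G} {f' : E → E →L[ℝ] G} {c : G}
    {n : ℕ} (hf : ∀ x ∈ f ⁻¹' {c}, HasStrictFDerivAt f (f' x) x)
    (hf' : ∀ x ∈ f ⁻¹' {c}, (f' x).range = ⊤) (hdim : finrank ℝ E = finrank ℝ G + n) :
    Nonempty (ChartedSpace (EuclideanSpace ℝ (Fin n)) (f ⁻¹' {c})) :=
  nonempty_chartedSpace_of_forall_exists_mem_source fun x =>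
    (hf x x.2).exists_chart_preimage_singleton x (hf' x x.2) hdim

end Submersion

theorem Complex.exists_dist_eq_dist_eq {A B : ℂ} {r s : ℝ} (h₁ : |r - s| ≤ dist A B)
    (h₂ : dist A B ≤ r + s) : ∃ C, dist A C = r ∧ dist C B = s := by
  set d := dist A B with hd_def
  obtain ⟨hrs, hsr⟩ := abs_sub_le_iff.1 h₁
  have hr : 0 ≤ r := by linarith
  have hd : 0 ≤ d := dist_nonneg
  -- As `C` runs along the half circle of radius `r` about `A` starting towards `B`,
  -- `dist C B` runs from `|r - d|` to `r + d`.
  let g : ℝ → ℝ := fun θ => ‖r * exp (θ * I) - d‖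
  have hg0 : g 0 = |r - d| := by simp [g, ← ofReal_sub, Complex.norm_real]
  have hgπ : g Real.pi = r + d := by
    show ‖(r : ℂ) * exp (Real.pi * I) - d‖ = r + d
    rw [exp_pi_mul_I, show (r : ℂ) * -1 - d = ((-(r + d) : ℝ) : ℂ) by push_cast; ring,
      Complex.norm_real, Real.norm_eq_abs, abs_neg, abs_of_nonneg (by linarith)]
  obtain ⟨θ, -, hθ⟩ : s ∈ g '' Set.Icc 0 Real.pi :=
    intermediate_value_Icc Real.pi_pos.le (Continuous.continuousOn (by fun_prop))
      ⟨by rw [hg0, abs_sub_le_iff]; constructor <;> linarith, by rw [hgπ]; linarith⟩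
  set u := exp (arg (B - A) * I)
  have hBA : B - A = d * u := by
    rw [show d = ‖B - A‖ by rw [hd_def, dist_comm, Complex.dist_eq], Complex.norm_mul_exp_arg_mul_I]
  refine ⟨A + r * exp (θ * I) * u, ?_, ?_⟩
  · simp [u, abs_of_nonneg hr]
  · rw [Complex.dist_eq, show A + r * exp (θ * I) * u - B = (r * exp (θ * I) - d) * u by
      linear_combination -hBA, norm_mul, Complex.norm_exp_ofReal_mul_I, mul_one]
    exact hθ

open Fin.NatCast in
theorem dist_le_sum_of_dist_succ {X : Type*} [PseudoMetricSpace X] {n : ℕ} [NeZero n]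
    {P : Fin n → X} {l : Fin n → ℝ} (hP : ∀ i, dist (P i) (P (i + 1)) = l i) (i : Fin n) :
    dist (P 0) (P i) ≤ ∑ j, l j := by
  let Q : ℕ → X := fun k => P k
  have hQ (k : ℕ) : dist (Q k) (Q (k + 1)) = l k := by simp [Q, hP]
  calc dist (P 0) (P i) = dist (Q 0) (Q i) := by simp [Q]
    _ ≤ ∑ k ∈ range i, l k := by simpa [hQ] using dist_le_range_sum_dist Q i
    _ ≤ ∑ k ∈ range n, l k := sum_le_sum_of_subset_of_nonneg (range_subset_range.2 i.is_lt.le)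
          fun k _ _ => hP k ▸ dist_nonneg
    _ = ∑ j, l j := by simp [← Fin.sum_univ_eq_sum_range]

def IsGeneric {ι : Type*} [Fintype ι] [DecidableEq ι] (l : ι → ℝ) : Prop :=
  ¬ ∃ I : Finset ι, I.Nonempty ∧ I ≠ univ ∧ ∑ i ∈ I, l i = ∑ i ∈ Iᶜ, l i

section Generic

variable {ι : Type*} [Fintype ι] [DecidableEq ι] [Nonempty ι] {l : ι → ℝ}

theorem not_isGeneric_of_abs_eq {s : ι → ℝ} (hl : ∀ i, 0 < l i) (hs : ∀ i, |s i| = l i)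
    (hsum : ∑ i, s i = 0) : ¬ IsGeneric l := by
  intro hgen
  set I := univ.filter fun i => s i < 0
  have hI : ∀ i ∈ I, l i = -s i := fun i hi => by rw [← hs i, abs_of_neg (mem_filter.1 hi).2]
  have hIc : ∀ i ∈ Iᶜ, l i = s i := fun i hi => by
    rw [← hs i, abs_of_nonneg (not_lt.1 fun h => mem_compl.1 hi (mem_filter.2 ⟨mem_univ i, h⟩))]
  have hbal : ∑ i ∈ I, l i = ∑ i ∈ Iᶜ, l i := by
    rw [sum_congr rfl hI, sum_congr rfl hIc, sum_neg_distrib, neg_eq_iff_add_eq_zero,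
      sum_add_sum_compl, hsum]
  have hpos : 0 < ∑ i, l i := sum_pos (fun i _ => hl i) univ_nonempty
  refine hgen ⟨I, nonempty_iff_ne_empty.2 fun h => ?_, fun h => ?_, hbal⟩
  · rw [h, sum_empty, compl_empty] at hbal
    linarith
  · rw [h, compl_univ, sum_empty] at hbal
    linarith

theorem not_isGeneric_of_abs_inner_eq {F : Type*} [NormedAddCommGroup F] [InnerProductSpace ℝ F]
    {e : ι → F} {u : F} (hu : u ≠ 0) (hpar : ∀ i, |⟪u, e i⟫| = ‖u‖ * ‖e i‖)
    (hsum : ∑ i, e i = 0) (hl : ∀ i, 0 < l i) (he : ∀ i, ‖e i‖ = l i) : ¬ IsGeneric l := by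
  have hu' : ‖u‖ ≠ 0 := norm_ne_zero_iff.2 hu
  refine not_isGeneric_of_abs_eq (s := fun i => ⟪u, e i⟫ / ‖u‖) hl (fun i => ?_) ?_
  · rw [abs_div, abs_norm, hpar, he]
    field_simp
  · rw [← sum_div, ← inner_sum, hsum, inner_zero_right, zero_div]

end Generic

theorem exists_inner_eq {F : Type*} [NormedAddCommGroup F] [InnerProductSpace ℝ F] {e : F}
    (he : e ≠ 0) (s : ℝ) : ∃ v, ⟪e, v⟫ = s :=
  ⟨(s / ‖e‖ ^ 2) • e, by
    rw [real_inner_smul_right, real_inner_self_eq_norm_sq]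
    field_simp [norm_ne_zero_iff.2 he]⟩

namespace Orientation

variable {E : Type*} [NormedAddCommGroup E] [InnerProductSpace ℝ E] [Fact (finrank ℝ E = 2)]
  (o : Orientation ℝ E (Fin 2))

theorem abs_inner_eq_norm_mul_norm_of_areaForm_eq_zero {x y : E} (h : o.areaForm x y = 0) :
    |⟪x, y⟫| = ‖x‖ * ‖y‖ := by
  have := o.inner_sq_add_areaForm_sq x y
  rw [h] at this
  rw [← abs_of_nonneg (by positivity : 0 ≤ ‖x‖ * ‖y‖), ← sq_eq_sq_iff_abs_eq_abs]
  linear_combination this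

theorem areaForm_eq_zero_trans {a b c : E} (hb : b ≠ 0) (hab : o.areaForm a b = 0)
    (hbc : o.areaForm b c = 0) : o.areaForm a c = 0 := by
  have := o.inner_mul_areaForm_sub b a c
  rw [hbc, o.areaForm_swap b a, hab] at this
  have hb' : ‖b‖ ^ 2 ≠ 0 := by positivity
  exact (mul_eq_zero.1 (by linarith : ‖b‖ ^ 2 * o.areaForm a c = 0)).resolve_left hb'

theorem exists_inner_eq_of_areaForm_ne_zero {e f : E} (h : o.areaForm e f ≠ 0) (s t : ℝ) :
    ∃ v, ⟪e, v⟫ = s ∧ ⟪f, v⟫ = t :=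
  -- Cramer's rule: `⟪x, J y⟫ = -ω x y` for the right-angle rotation `J`.
  ⟨(o.areaForm e f)⁻¹ • (t • o.rightAngleRotation e - s • o.rightAngleRotation f), by
    simp [inner_smul_right, inner_sub_right, o.areaForm_swap f e]
    constructor <;> field_simp⟩

theorem exists_inner_sub_chain_eq {e₁ e₂ e₃ e₄ : E} (h₁ : e₁ ≠ 0) (h₂ : e₂ ≠ 0) (h₃ : e₃ ≠ 0)
    (h₄ : e₄ ≠ 0)
    (h : o.areaForm e₁ e₂ ≠ 0 ∨ o.areaForm e₂ e₃ ≠ 0 ∨ o.areaForm e₃ e₄ ≠ 0) (a b : E)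
    (s₁ s₂ s₃ s₄ : ℝ) :
    ∃ v₂ v₃ v₄ : E, ⟪e₁, v₂ - b⟫ = s₁ ∧ ⟪e₂, v₃ - v₂⟫ = s₂ ∧ ⟪e₃, v₄ - v₃⟫ = s₃ ∧
      ⟪e₄, a - v₄⟫ = s₄ := by
  -- The vertex between the two non-parallel edges takes both of their equations; each other
  -- vertex is then fixed by one equation, working inwards from `a` and `b`.
  simp only [inner_sub_right]
  rcases h with h | h | h
  · obtain ⟨v₄, hv₄⟩ := exists_inner_eq h₄ (⟪e₄, a⟫ - s₄)
    obtain ⟨v₃, hv₃⟩ := exists_inner_eq h₃ (⟪e₃, v₄⟫ - s₃)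
    obtain ⟨v₂, hv₁, hv₂⟩ :=
      o.exists_inner_eq_of_areaForm_ne_zero h (s₁ + ⟪e₁, b⟫) (⟪e₂, v₃⟫ - s₂)
    exact ⟨v₂, v₃, v₄, by linarith, by linarith, by linarith, by linarith⟩
  · obtain ⟨v₂, hv₂⟩ := exists_inner_eq h₁ (s₁ + ⟪e₁, b⟫)
    obtain ⟨v₄, hv₄⟩ := exists_inner_eq h₄ (⟪e₄, a⟫ - s₄)
    obtain ⟨v₃, hv₂', hv₃⟩ :=
      o.exists_inner_eq_of_areaForm_ne_zero h (s₂ + ⟪e₂, v₂⟫) (⟪e₃, v₄⟫ - s₃)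
    exact ⟨v₂, v₃, v₄, by linarith, by linarith, by linarith, by linarith⟩
  · obtain ⟨v₂, hv₂⟩ := exists_inner_eq h₁ (s₁ + ⟪e₁, b⟫)
    obtain ⟨v₃, hv₃⟩ := exists_inner_eq h₂ (s₂ + ⟪e₂, v₂⟫)
    obtain ⟨v₄, hv₃', hv₄⟩ :=
      o.exists_inner_eq_of_areaForm_ne_zero h (s₃ + ⟪e₃, v₃⟫) (⟪e₄, a⟫ - s₄)
    exact ⟨v₂, v₃, v₄, by linarith, by linarith, by linarith, by linarith⟩

end Orientation

namespace Polygon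

variable {E : Type*} {n : ℕ} [NeZero n]

def edge [Sub E] (P : Fin n → E) (i : Fin n) : E := P (i + 1) - P i

theorem sum_edge [AddCommGroup E] (P : Fin n → E) : ∑ i, edge P i = 0 := by
  simp only [edge, sum_sub_distrib]
  exact sub_eq_zero.2 (Equiv.sum_comp (Equiv.addRight 1) P)

theorem norm_edge [SeminormedAddCommGroup E] (P : Fin n → E) (i : Fin n) :
    ‖edge P i‖ = dist (P i) (P (i + 1)) := by
  rw [edge, dist_comm, dist_eq_norm]

end Polygon

theorem exists_pentagon_diagonals {l : Fin 5 → ℝ} (hl : ∀ i, 0 ≤ l i)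
    (hpoly : ∀ i, l i ≤ ∑ j ∈ univ.erase i, l j) :
    ∃ x y : ℝ, |x - y| ≤ l 0 ∧ l 0 ≤ x + y ∧ |l 1 - l 2| ≤ x ∧ x ≤ l 1 + l 2 ∧
      |l 3 - l 4| ≤ y ∧ y ≤ l 3 + l 4 := by
  simp only [sum_erase_eq_sub (mem_univ _), Fin.sum_univ_five] at hpoly
  have := hpoly 0; have := hpoly 1; have := hpoly 2; have := hpoly 3; have := hpoly 4
  have := hl 0; have := hl 1; have := hl 2; have := hl 3; have := hl 4
  simp only [abs_sub_le_iff]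
  rcases le_total (l 1 + l 2) (l 3 + l 4 + l 0) with h₁ | h₁
  · rcases le_total (l 3 + l 4) (l 1 + l 2 + l 0) with h₂ | h₂
    · exact ⟨l 1 + l 2, l 3 + l 4, by split_ands <;> linarith⟩
    · exact ⟨l 1 + l 2, l 1 + l 2 + l 0, by split_ands <;> linarith⟩
  · exact ⟨l 3 + l 4 + l 0, l 3 + l 4, by split_ands <;> linarith⟩

namespace Pentagon

open Polygon

section Plane

variable {E : Type*} [NormedAddCommGroup E] [InnerProductSpace ℝ E]

theorem areaForm_edge_ne_zero [Fact (finrank ℝ E = 2)] (o : Orientation ℝ E (Fin 2))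
    {l : Fin 5 → ℝ} (hl : ∀ i, 0 < l i) (hgen : IsGeneric l) {P : Fin 5 → E}
    (hP : ∀ i, dist (P i) (P (i + 1)) = l i) :
    o.areaForm (edge P 1) (edge P 2) ≠ 0 ∨ o.areaForm (edge P 2) (edge P 3) ≠ 0 ∨
      o.areaForm (edge P 3) (edge P 4) ≠ 0 := by
  have he i : ‖edge P i‖ = l i := by rw [norm_edge, hP]
  have hne i : edge P i ≠ 0 := norm_ne_zero_iff.1 (he i ▸ (hl i).ne')
  by_contra! h
  obtain ⟨h₁₂, h₂₃, h₃₄⟩ := h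
  have h₁₃ := o.areaForm_eq_zero_trans (hne 2) h₁₂ h₂₃
  have h₁₄ := o.areaForm_eq_zero_trans (hne 3) h₁₃ h₃₄
  have h₁₀ : o.areaForm (edge P 1) (edge P 0) = 0 := by
    have hsum := sum_edge P
    rw [Fin.sum_univ_five] at hsum
    rw [show edge P 0 = -(edge P 1 + edge P 2 + edge P 3 + edge P 4) by
      rw [eq_neg_iff_add_eq_zero, ← hsum]; abel]
    simp [h₁₂, h₁₃, h₁₄]
  refine not_isGeneric_of_abs_inner_eq (hne 1)
    (fun i => o.abs_inner_eq_norm_mul_norm_of_areaForm_eq_zero ?_) (sum_edge P) hl he hgen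
  fin_cases i <;> simp [h₁₀, h₁₂, h₁₃, h₁₄]

noncomputable def constraint (P : Fin 5 → E) : E × E × (Fin 4 → ℝ) :=
  (P 0, P 1, fun j => ‖edge P j.succ‖ ^ 2)

noncomputable def constraintDeriv (P : Fin 5 → E) : (Fin 5 → E) →L[ℝ] E × E × (Fin 4 → ℝ) :=
  (ContinuousLinearMap.proj 0).prod <| (ContinuousLinearMap.proj 1).prod <|
    ContinuousLinearMap.pi fun j => (2 • innerSL ℝ (edge P j.succ)).comp
      (ContinuousLinearMap.proj (R := ℝ) (φ := fun _ : Fin 5 => E) (j.succ + 1) -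
        ContinuousLinearMap.proj j.succ)

theorem constraintDeriv_apply (P w : Fin 5 → E) :
    constraintDeriv P w = (w 0, w 1, fun j => 2 * ⟪edge P j.succ, edge w j.succ⟫) := by
  refine Prod.ext rfl (Prod.ext rfl (funext fun j => ?_))
  simp [constraintDeriv, edge, inner_sub_left, inner_sub_right]
  ring

theorem hasStrictFDerivAt_constraint (P : Fin 5 → E) :
    HasStrictFDerivAt constraint (constraintDeriv P) P := by
  unfold constraint
  exact (hasStrictFDerivAt_apply 0 P).prodMk <| (hasStrictFDerivAt_apply 1 P).prodMk <|
    hasStrictFDerivAt_pi.2 fun _ => (hasStrictFDerivAt_norm_sq _).comp P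
      ((hasStrictFDerivAt_apply _ P).sub (hasStrictFDerivAt_apply _ P))

theorem range_constraintDeriv_eq_top [Fact (finrank ℝ E = 2)] {l : Fin 5 → ℝ}
    (hl : ∀ i, 0 < l i) (hgen : IsGeneric l) {P : Fin 5 → E}
    (hP : ∀ i, dist (P i) (P (i + 1)) = l i) : (constraintDeriv P).range = ⊤ := by
  have : FiniteDimensional ℝ E := .of_fact_finrank_eq_two
  let o : Orientation ℝ E (Fin 2) := (finBasisOfFinrankEq ℝ E Fact.out).orientation
  have hne i : edge P i ≠ 0 := by
    rw [← norm_ne_zero_iff, norm_edge, hP]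
    exact (hl i).ne'
  rw [LinearMap.range_eq_top]
  rintro ⟨a, b, t⟩
  obtain ⟨v₂, v₃, v₄, h₁, h₂, h₃, h₄⟩ := o.exists_inner_sub_chain_eq (hne 1) (hne 2) (hne 3)
    (hne 4) (areaForm_edge_ne_zero o hl hgen hP) a b (t 0 / 2) (t 1 / 2) (t 2 / 2) (t 3 / 2)
  refine ⟨![a, b, v₂, v₃, v₄], ?_⟩
  rw [ContinuousLinearMap.coe_coe, constraintDeriv_apply]
  refine Prod.ext rfl (Prod.ext rfl (funext fun j => ?_))
  fin_cases j <;> simp [edge] at h₁ h₂ h₃ h₄ ⊢ <;> linarith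

end Plane

def slice (l : Fin 5 → ℝ) : Set (Fin 5 → ℂ) :=
  {P | P 0 = 0 ∧ P 1 = (l 0 : ℂ) ∧ ∀ i, dist (P i) (P (i + 1)) = l i}

theorem slice_nonempty {l : Fin 5 → ℝ} (hl : ∀ i, 0 ≤ l i)
    (hpoly : ∀ i, l i ≤ ∑ j ∈ univ.erase i, l j) : (slice l).Nonempty := by
  obtain ⟨x, y, h₁, h₂, h₃, h₄, h₅, h₆⟩ := exists_pentagon_diagonals hl hpoly
  have h₁₀ : dist (l 0 : ℂ) 0 = l 0 := by simp [hl 0]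
  obtain ⟨P₃, h₁₃, h₃₀⟩ := Complex.exists_dist_eq_dist_eq (by rwa [h₁₀]) (by rwa [h₁₀])
  obtain ⟨P₂, h₁₂, h₂₃⟩ := Complex.exists_dist_eq_dist_eq (by rwa [h₁₃]) (by rwa [h₁₃])
  obtain ⟨P₄, h₃₄, h₄₀⟩ := Complex.exists_dist_eq_dist_eq (by rwa [h₃₀]) (by rwa [h₃₀])
  rw [dist_zero_right] at h₄₀
  refine ⟨![0, l 0, P₂, P₃, P₄], rfl, rfl, fun i => ?_⟩
  fin_cases i <;> simp [hl 0, h₁₂, h₂₃, h₃₄, h₄₀]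

theorem isCompact_slice (l : Fin 5 → ℝ) : IsCompact (slice l) := by
  refine Metric.isCompact_of_isClosed_isBounded ?_ ?_
  · simp only [slice, Set.ofPred_and, Set.ofPred_forall]
    exact (isClosed_eq (continuous_apply 0) continuous_const).inter
      ((isClosed_eq (continuous_apply 1) continuous_const).inter
        (isClosed_iInter fun i => isClosed_eq (by fun_prop) continuous_const))
  · refine (Metric.isBounded_closedBall (x := 0) (r := ∑ j, l j)).subset ?_
    rintro P ⟨h₀, -, hP⟩
    have hbound := dist_le_sum_of_dist_succ hP
    rw [mem_closedBall_zero_iff, pi_norm_le_iff_of_nonneg (dist_self (P 0) ▸ hbound 0)]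
    intro i
    simpa [h₀] using hbound i

theorem slice_eq_preimage {l : Fin 5 → ℝ} (hl : ∀ i, 0 ≤ l i) :
    slice l = constraint ⁻¹' {(0, (l 0 : ℂ), fun j => l j.succ ^ 2)} := by
  ext P
  simp only [slice, constraint, Set.mem_ofPred_eq, Set.mem_preimage, Set.mem_singleton_iff,
    Prod.mk.injEq, funext_iff, ← norm_edge]
  refine and_congr_right fun h₀ => and_congr_right fun h₁ => ?_
  have : ‖edge P 0‖ = l 0 := by simp [edge, h₀, h₁, hl 0]
  rw [Fin.forall_fin_succ]
  simp only [this, true_and]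
  exact forall_congr' fun j => (pow_left_inj₀ (norm_nonneg _) (hl _) two_ne_zero).symm

end Pentagon

/-- Let `l : Fin 5 → ℝ` be positive, satisfy the polygon inequality, and
be generic.  Then the moduli space `M(l)`, realized as the slice
`S(l) = { P : Fin 5 → ℂ | P 0 = 0, P 1 = (l 0, 0), dist (P i) (P (i+1)) = l i for all i }`
(the plane `ℝ²` modeled as `ℂ`, indices cyclic mod 5), is a nonempty compact topological
2-manifold: it is nonempty, compact, and carries a charted-space structure over
`EuclideanSpace ℝ (Fin 2)`. -/
theorem generic_pentagon_moduli_space_is_compact_surface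
    (l : Fin 5 → ℝ) (hl : ∀ i, 0 < l i)
    (hpoly : ∀ i, l i ≤ ∑ j ∈ Finset.univ.erase i, l j)
    (hgen : ¬ ∃ I : Finset (Fin 5), I.Nonempty ∧ I ≠ Finset.univ ∧
      ∑ i ∈ I, l i = ∑ i ∈ Iᶜ, l i) :
    Nonempty {P : Fin 5 → ℂ // P 0 = 0 ∧ P 1 = (l 0 : ℂ) ∧
        ∀ i, dist (P i) (P (i + 1)) = l i} ∧
    CompactSpace {P : Fin 5 → ℂ // P 0 = 0 ∧ P 1 = (l 0 : ℂ) ∧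
        ∀ i, dist (P i) (P (i + 1)) = l i} ∧
    Nonempty
      (ChartedSpace (EuclideanSpace ℝ (Fin 2))
        {P : Fin 5 → ℂ // P 0 = 0 ∧ P 1 = (l 0 : ℂ) ∧
          ∀ i, dist (P i) (P (i + 1)) = l i}) := by
  have hl₀ i : 0 ≤ l i := (hl i).le
  refine ⟨(Pentagon.slice_nonempty hl₀ hpoly).to_subtype,
    isCompact_iff_compactSpace.mp (Pentagon.isCompact_slice l), ?_⟩
  have := Complex.finrank_real_complex_fact
  change Nonempty (ChartedSpace _ (Pentagon.slice l))
  rw [Pentagon.slice_eq_preimage hl₀]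
  refine nonempty_chartedSpace_preimage_singleton
    (fun P _ => Pentagon.hasStrictFDerivAt_constraint P) (fun P hP => ?_) ?_
  · rw [← Pentagon.slice_eq_preimage hl₀] at hP
    exact Pentagon.range_constraintDeriv_eq_top hl hgen hP.2.2
  · simp [Module.finrank_prod, Module.finrank_pi_fintype, Complex.finrank_real_complex]
end

section
/- For the pentagonal linkage l = (1, 1, 1, 1/2, 2), the moduli space M(l), realized as the slice S(l) = { P : Fin 5 → ℝ² | P 0 = 0, P 1 = (1, 0), dist (P i) (P (i+1 mod 5)) = l i for all i }, is homeomorphic to the 2-torus, i.e. to the product Circle × Circle of two copies of the unit circle. -/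
/-!
Write the edges of a configuration as `P 2 - P 1 = a`, `P 3 - P 2 = b`, `P 4 - P 3 = u / 2` with
`a`, `b`, `u` unit complex numbers; the only remaining condition is `‖1 + a + b + u / 2‖ = 2`.
Put `r = ‖2 + u‖ ∈ [1, 3]` and `v = (2 + u) / r`. Writing `a = v A` and `b = v B` turns the condition
into `‖r / 2 + A + B‖ = 2`, which no longer involves `u` except through `r`. Here `A` runs over the
arc of the unit circle on which `‖r / 2 + A‖ ≥ 1`, and for each such `A` there are two solutions `B`,
which coincide exactly at the endpoints of the arc. So the fibre over `u` is two arcs glued at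
their ends, a circle, and `(x, y) ∈ S¹` parametrises it continuously in `u`: `x` places `A` on
the arc and the sign of `y` chooses `B`. A continuous bijection from the compact torus to the
Hausdorff slice is a homeomorphism.
-/

noncomputable section

open Complex

lemma re_sq_add_im_sq {z : ℂ} (hz : ‖z‖ = 1) : z.re ^ 2 + z.im ^ 2 = 1 := by
  rw [← Real.sqrt_eq_one, ← norm_eq_sqrt_sq_add_sq, hz]

lemma sq_norm_ofReal_add (c : ℝ) {z : ℂ} (hz : ‖z‖ = 1) :
    ‖(c : ℂ) + z‖ ^ 2 = c ^ 2 + 2 * c * z.re + 1 := by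
  rw [Complex.sq_norm, normSq_apply]
  simp only [add_re, ofReal_re, add_im, ofReal_im, zero_add]
  linear_combination re_sq_add_im_sq hz

/-- The unit vector with real part `1 - k x²`: its imaginary part `± √(1 - (1 - k x²)²)` is written
as `x √(k (2 - k x²))`, which is continuous and odd in `x`. -/
def arcPoint (k x : ℝ) : ℂ := ((1 - k * x ^ 2 : ℝ) : ℂ) + ((x * √(k * (2 - k * x ^ 2)) : ℝ) : ℂ) * I

section arcPoint

variable {k x : ℝ}

@[simp] lemma arcPoint_re : (arcPoint k x).re = 1 - k * x ^ 2 := by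
  rw [arcPoint, add_re, ofReal_re, re_ofReal_mul, I_re, mul_zero, add_zero]

@[simp] lemma arcPoint_im : (arcPoint k x).im = x * √(k * (2 - k * x ^ 2)) := by
  rw [arcPoint, add_im, ofReal_im, im_ofReal_mul, I_im, mul_one, zero_add]

lemma norm_arcPoint (hk : 0 ≤ k) (hx : k * x ^ 2 ≤ 2) : ‖arcPoint k x‖ = 1 := by
  have hs : √(k * (2 - k * x ^ 2)) ^ 2 = k * (2 - k * x ^ 2) :=
    Real.sq_sqrt (mul_nonneg hk (by linarith))
  rw [← pow_eq_one_iff_of_nonneg (norm_nonneg _) two_ne_zero, Complex.sq_norm, normSq_apply,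
    arcPoint_re, arcPoint_im]
  linear_combination x ^ 2 * hs

lemma arcPoint_injective (hk : 0 < k) (hx : k * x ^ 2 < 2) {x' : ℝ}
    (h : arcPoint k x = arcPoint k x') : x = x' := by
  have hre : k * x ^ 2 = k * x' ^ 2 := by simpa using congrArg Complex.re h
  have him := congrArg Complex.im h
  simp only [arcPoint_im, ← hre] at him
  exact mul_right_cancel₀ (Real.sqrt_pos.2 (mul_pos hk (by linarith))).ne' him

lemma exists_arcPoint_eq (hk : 0 ≤ k) {A : ℂ} (hA : ‖A‖ = 1) (hx : k * x ^ 2 = 1 - A.re) :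
    ∃ x', x' ^ 2 = x ^ 2 ∧ arcPoint k x' = A := by
  have hA2 := re_sq_add_im_sq hA
  have him : (arcPoint k x).im ^ 2 = A.im ^ 2 := by
    rw [arcPoint_im, mul_pow, Real.sq_sqrt (mul_nonneg hk (by nlinarith [sq_nonneg A.im]))]
    linear_combination (1 - k * x ^ 2 + A.re) * hx - hA2
  rcases sq_eq_sq_iff_eq_or_eq_neg.1 him with h | h
  · exact ⟨x, rfl, Complex.ext (by simp [hx]) h⟩
  · refine ⟨-x, neg_sq x, Complex.ext (by simp [hx]) ?_⟩
    simpa [neg_mul, neg_sq, neg_eq_iff_eq_neg] using h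

end arcPoint

def fiberRadius (r y : ℝ) : ℝ := √(1 + r * (1 + r / 4) * y ^ 2)

/-- This is `(1 - μ) / y²` for the real part `μ = (3 - ρ²) / (2ρ)` forced on `B / (unit direction
of r/2 + A)`, where `ρ = fiberRadius r y`; the factor `ρ² - 1 = r (1 + r/4) y²` is cancelled, so it
stays continuous at `y = 0`. -/
def fiberCoeff (r y : ℝ) : ℝ :=
  r * (1 + r / 4) * (fiberRadius r y + 3) / (2 * fiberRadius r y * (fiberRadius r y + 1))

def fiberPoint (r x y : ℝ) : ℂ × ℂ :=
  (arcPoint (1 + r / 4) x,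
    (↑(r / 2) + arcPoint (1 + r / 4) x) / fiberRadius r y * arcPoint (fiberCoeff r y) y)

section fiber

variable {r x y : ℝ}

lemma sq_fiberRadius (hr : 0 ≤ r) : fiberRadius r y ^ 2 = 1 + r * (1 + r / 4) * y ^ 2 :=
  Real.sq_sqrt (by positivity)

lemma one_le_fiberRadius (hr : 0 ≤ r) : 1 ≤ fiberRadius r y :=
  Real.one_le_sqrt.2 (le_add_of_nonneg_right (by positivity))

lemma fiberRadius_pos (hr : 0 ≤ r) : 0 < fiberRadius r y :=
  zero_lt_one.trans_le (one_le_fiberRadius hr)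

lemma fiberRadius_lt_three (hr : 0 ≤ r) (hr4 : r < 4) (hy : y ^ 2 ≤ 1) :
    fiberRadius r y < 3 := by
  have h := sq_fiberRadius (y := y) hr
  nlinarith [one_le_fiberRadius (y := y) hr,
    mul_le_mul_of_nonneg_left hy (by positivity : 0 ≤ r * (1 + r / 4))]

lemma one_sub_fiberCoeff_mul_sq (hr : 0 ≤ r) :
    1 - fiberCoeff r y * y ^ 2 = (3 - fiberRadius r y ^ 2) / (2 * fiberRadius r y) := by
  have h := sq_fiberRadius (y := y) hr
  have h1 := one_le_fiberRadius (y := y) hr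
  rw [fiberCoeff]
  field_simp
  linear_combination 4 * (fiberRadius r y + 3) * h

lemma fiberCoeff_nonneg (hr : 0 ≤ r) : 0 ≤ fiberCoeff r y := by
  have := one_le_fiberRadius (y := y) hr
  unfold fiberCoeff; positivity

lemma fiberCoeff_pos (hr : 0 < r) : 0 < fiberCoeff r y := by
  have := one_le_fiberRadius (y := y) hr.le
  unfold fiberCoeff; positivity

lemma fiberCoeff_mul_sq_lt_two (hr : 0 ≤ r) (hr4 : r < 4) (hy : y ^ 2 ≤ 1) :
    fiberCoeff r y * y ^ 2 < 2 := by
  have h1 := one_le_fiberRadius (y := y) hr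
  have h3 := fiberRadius_lt_three hr hr4 hy
  have : -1 < (3 - fiberRadius r y ^ 2) / (2 * fiberRadius r y) := by
    rw [lt_div_iff₀ (by linarith)]; nlinarith
  linarith [one_sub_fiberCoeff_mul_sq (y := y) hr]

lemma norm_ofReal_add_arcPoint (hr : 0 ≤ r) (hA : ‖arcPoint (1 + r / 4) x‖ = 1)
    (hxy : x ^ 2 + y ^ 2 = 1) : ‖↑(r / 2) + arcPoint (1 + r / 4) x‖ = fiberRadius r y := by
  rw [← sq_eq_sq₀ (norm_nonneg _) (fiberRadius_pos hr).le, sq_norm_ofReal_add _ hA,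
    sq_fiberRadius hr, arcPoint_re]
  linear_combination (-(r * (1 + r / 4))) * hxy

lemma norm_add_div_mul {W : ℂ} {ρ : ℝ} (hW : ‖W‖ = ρ) (hρ : ρ ≠ 0) (β : ℂ) :
    ‖W + W / ρ * β‖ = ‖(ρ : ℂ) + β‖ := by
  have : W + W / ρ * β = W / ρ * (ρ + β) := by
    rw [mul_add, div_mul_cancel₀ _ (ofReal_ne_zero.2 hρ)]
  rw [this, norm_mul, norm_div, hW, norm_real, Real.norm_eq_abs, ← hW, abs_norm,
    div_self (hW ▸ hρ), one_mul]

lemma norm_fiberPoint (hr : 0 ≤ r) (hr4 : r < 4) (hxy : x ^ 2 + y ^ 2 = 1) :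
    ‖(fiberPoint r x y).1‖ = 1 ∧ ‖(fiberPoint r x y).2‖ = 1 ∧
      ‖↑(r / 2) + (fiberPoint r x y).1 + (fiberPoint r x y).2‖ = 2 := by
  have hy : y ^ 2 ≤ 1 := by nlinarith
  have hρ := fiberRadius_pos (y := y) hr
  have hA : ‖arcPoint (1 + r / 4) x‖ = 1 := norm_arcPoint (by positivity) (by nlinarith)
  have hW := norm_ofReal_add_arcPoint hr hA hxy
  have hβ : ‖arcPoint (fiberCoeff r y) y‖ = 1 :=
    norm_arcPoint (fiberCoeff_nonneg hr) (fiberCoeff_mul_sq_lt_two hr hr4 hy).le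
  refine ⟨hA, ?_, ?_⟩
  · rw [fiberPoint, norm_mul, norm_div, hW, norm_real, Real.norm_of_nonneg hρ.le,
      div_self hρ.ne', one_mul, hβ]
  · rw [fiberPoint, norm_add_div_mul hW hρ.ne', ← sq_eq_sq₀ (norm_nonneg _) zero_le_two,
      sq_norm_ofReal_add _ hβ, arcPoint_re, one_sub_fiberCoeff_mul_sq hr]
    field_simp
    ring

lemma fiberPoint_injective (hr : 0 < r) (hr4 : r < 4) {x' y' : ℝ} (hxy : x ^ 2 + y ^ 2 = 1)
    (hxy' : x' ^ 2 + y' ^ 2 = 1) (h : fiberPoint r x y = fiberPoint r x' y') :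
    x = x' ∧ y = y' := by
  obtain rfl : x = x' :=
    arcPoint_injective (by positivity) (by nlinarith) (congrArg Prod.fst h)
  have hρ : fiberRadius r y' = fiberRadius r y := by
    simp only [fiberRadius, show y' ^ 2 = y ^ 2 by linarith]
  have hk : fiberCoeff r y' = fiberCoeff r y := by simp only [fiberCoeff, hρ]
  have hW : ‖↑(r / 2) + arcPoint (1 + r / 4) x‖ = fiberRadius r y :=
    norm_ofReal_add_arcPoint hr.le (norm_arcPoint (by positivity) (by nlinarith)) hxy
  have hW0 : (↑(r / 2) + arcPoint (1 + r / 4) x) / fiberRadius r y ≠ 0 := by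
    have := fiberRadius_pos (y := y) hr.le
    rw [← norm_ne_zero_iff, norm_div, hW, norm_real, Real.norm_of_nonneg this.le,
      div_self this.ne']
    exact one_ne_zero
  have h2 := congrArg Prod.snd h
  simp only [fiberPoint, hρ, hk] at h2
  exact ⟨rfl, arcPoint_injective (fiberCoeff_pos hr)
    (fiberCoeff_mul_sq_lt_two hr.le hr4 (by nlinarith)) (mul_left_cancel₀ hW0 h2)⟩

lemma exists_fiberPoint_eq (hr : 0 < r) {A B : ℂ} (hA : ‖A‖ = 1) (hB : ‖B‖ = 1)
    (hAB : ‖↑(r / 2) + A + B‖ = 2) : ∃ x y, x ^ 2 + y ^ 2 = 1 ∧ fiberPoint r x y = (A, B) := by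
  set W := ↑(r / 2) + A
  have hW1 : 1 ≤ ‖W‖ := by linarith [norm_add_le W B]
  have hWsq : ‖W‖ ^ 2 = (r / 2) ^ 2 + 2 * (r / 2) * A.re + 1 := sq_norm_ofReal_add _ hA
  have hAre : -(r / 4) ≤ A.re := by nlinarith
  have hAre1 : A.re ≤ 1 := (re_le_norm A).trans hA.le
  have hk : 0 < 1 + r / 4 := by positivity
  obtain ⟨x, hx2, hx⟩ := exists_arcPoint_eq (k := 1 + r / 4) (x := √((1 - A.re) / (1 + r / 4)))
    hk.le hA (by rw [Real.sq_sqrt (div_nonneg (by linarith) hk.le)]; field_simp)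
  rw [Real.sq_sqrt (div_nonneg (by linarith) hk.le)] at hx2
  have hx1 : x ^ 2 ≤ 1 := by
    rw [hx2, div_le_one hk]; linarith
  set y₀ := √(1 - x ^ 2)
  have hxy : x ^ 2 + y₀ ^ 2 = 1 := by rw [Real.sq_sqrt (by linarith)]; ring
  have hρ : fiberRadius r y₀ = ‖W‖ := by
    have h := norm_ofReal_add_arcPoint hr.le (by rw [hx]; exact hA) hxy
    rw [hx] at h
    exact h.symm
  have hW0 : W / ‖W‖ ≠ 0 :=
    div_ne_zero (norm_ne_zero_iff.1 (by linarith)) (ofReal_ne_zero.2 (by linarith))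
  set β := B / (W / ‖W‖)
  have hBβ : W / ‖W‖ * β = B := mul_div_cancel₀ _ hW0
  have hβ : ‖β‖ = 1 := by
    rw [norm_div, hB, norm_div, norm_real, norm_norm, div_self (by linarith), div_one]
  have hβre : fiberCoeff r y₀ * y₀ ^ 2 = 1 - β.re := by
    rw [← hBβ, norm_add_div_mul rfl (by linarith), ← sq_eq_sq₀ (norm_nonneg _) zero_le_two,
      sq_norm_ofReal_add _ hβ] at hAB
    have h := one_sub_fiberCoeff_mul_sq (y := y₀) hr.le
    rw [hρ] at h
    field_simp at h
    nlinarith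
  obtain ⟨y, hy2, hy⟩ := exists_arcPoint_eq (fiberCoeff_nonneg hr.le) hβ hβre
  have hρy : fiberRadius r y = fiberRadius r y₀ := by simp only [fiberRadius, hy2]
  have hky : fiberCoeff r y = fiberCoeff r y₀ := by simp only [fiberCoeff, hρy]
  refine ⟨x, y, hy2 ▸ hxy, ?_⟩
  rw [fiberPoint, hρy, hky, hy, hx, hρ, hBβ]

end fiber

def pentagon (a b u : ℂ) : Fin 5 → ℂ := ![0, 1, 1 + a, 1 + a + b, 1 + a + b + u / 2]

def pentagonSlice : Set (Fin 5 → ℂ) :=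
  {P | P 0 = 0 ∧ P 1 = 1 ∧ ∀ i, dist (P i) (P (i + 1)) = ![1, 1, 1, 1/2, 2] i}

lemma mem_pentagonSlice_iff {P : Fin 5 → ℂ} : P ∈ pentagonSlice ↔ ∃ a b u : ℂ,
    ‖a‖ = 1 ∧ ‖b‖ = 1 ∧ ‖u‖ = 1 ∧ ‖1 + a + b + u / 2‖ = 2 ∧ pentagon a b u = P := by
  constructor
  · rintro ⟨h0, h1, hd⟩
    have e1 : ‖1 - P 2‖ = 1 := by simpa [dist_eq_norm, h1] using hd 1
    have e2 : ‖P 2 - P 3‖ = 1 := by simpa [dist_eq_norm] using hd 2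
    have e3 : ‖P 3 - P 4‖ = 1 / 2 := by simpa [dist_eq_norm] using hd 3
    have e4 : ‖P 4‖ = 2 := by simpa [dist_eq_norm, h0] using hd 4
    refine ⟨P 2 - 1, P 3 - P 2, 2 * (P 4 - P 3), by rwa [norm_sub_rev], by rwa [norm_sub_rev],
      ?_, ?_, ?_⟩
    · rw [norm_mul, norm_sub_rev, e3]; norm_num
    · convert e4 using 2; ring
    · ext i; fin_cases i <;> simp [pentagon, h0, h1]
  · rintro ⟨a, b, u, ha, hb, hu, h4, rfl⟩
    refine ⟨rfl, rfl, fun i => ?_⟩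
    fin_cases i <;> simp [pentagon, dist_eq_norm, ha, hb, hu, h4]

lemma pentagon_injective {a b u a' b' u' : ℂ} (h : pentagon a b u = pentagon a' b' u') :
    a = a' ∧ b = b' ∧ u = u' := by
  have h2 : 1 + a = 1 + a' := congrFun h 2
  have h3 : 1 + a + b = 1 + a' + b' := congrFun h 3
  have h4 : 1 + a + b + u / 2 = 1 + a' + b' + u' / 2 := congrFun h 4
  exact ⟨by linear_combination h2, by linear_combination h3 - h2,
    by linear_combination 2 * (h4 - h3)⟩

def torusPentagon (u w : ℂ) : Fin 5 → ℂ :=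
  pentagon ((2 + u) / ‖2 + u‖ * (fiberPoint ‖2 + u‖ w.re w.im).1)
    ((2 + u) / ‖2 + u‖ * (fiberPoint ‖2 + u‖ w.re w.im).2) u

section torus

variable {u : ℂ}

lemma two_add_ne_zero (hu : ‖u‖ = 1) : 2 + u ≠ 0 := by
  intro h
  rw [← neg_eq_of_add_eq_zero_right h, norm_neg] at hu
  norm_num at hu

lemma one_le_norm_two_add (hu : ‖u‖ = 1) : 1 ≤ ‖2 + u‖ := by
  have := norm_add_le (2 + u) (-u)
  simp only [add_neg_cancel_right, norm_neg, hu, Complex.norm_ofNat] at this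
  linarith

lemma norm_two_add_le_three (hu : ‖u‖ = 1) : ‖2 + u‖ ≤ 3 := by
  have := norm_add_le (2 : ℂ) u
  rw [hu, Complex.norm_ofNat] at this
  linarith

lemma norm_div_norm_two_add (hu : ‖u‖ = 1) : ‖(2 + u) / ‖2 + u‖‖ = 1 := by
  rw [norm_div, norm_real, norm_norm, div_self (norm_ne_zero_iff.2 (two_add_ne_zero hu))]

lemma one_add_mul_add_mul_add_half (hu : ‖u‖ = 1) (A B : ℂ) :
    1 + (2 + u) / ‖2 + u‖ * A + (2 + u) / ‖2 + u‖ * B + u / 2 =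
      (2 + u) / ‖2 + u‖ * (↑(‖2 + u‖ / 2) + A + B) := by
  have : (‖2 + u‖ : ℂ) ≠ 0 := ofReal_ne_zero.2 (norm_ne_zero_iff.2 (two_add_ne_zero hu))
  push_cast
  field_simp
  ring

lemma torusPentagon_mem {w : ℂ} (hu : ‖u‖ = 1) (hw : ‖w‖ = 1) :
    torusPentagon u w ∈ pentagonSlice := by
  obtain ⟨hA, hB, hAB⟩ := norm_fiberPoint (norm_nonneg (2 + u))
    (by linarith [norm_two_add_le_three hu]) (re_sq_add_im_sq hw)
  have hv := norm_div_norm_two_add hu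
  exact mem_pentagonSlice_iff.2 ⟨_, _, u, by rw [norm_mul, hv, hA, one_mul],
    by rw [norm_mul, hv, hB, one_mul], hu,
    by rw [one_add_mul_add_mul_add_half hu, norm_mul, hv, hAB, one_mul], rfl⟩

lemma torusPentagon_injective :
    Function.Injective fun p : Circle × Circle => torusPentagon p.1 p.2 := by
  rintro ⟨u, w⟩ ⟨u', w'⟩ h
  obtain ⟨ha, hb, hu⟩ := pentagon_injective h
  obtain rfl : u = u' := Circle.ext hu
  have hv : (2 + (u : ℂ)) / ‖2 + (u : ℂ)‖ ≠ 0 := by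
    rw [← norm_ne_zero_iff, norm_div_norm_two_add u.norm_coe]; exact one_ne_zero
  have hxy := fiberPoint_injective (by linarith [one_le_norm_two_add u.norm_coe])
    (by linarith [norm_two_add_le_three u.norm_coe]) (re_sq_add_im_sq w.norm_coe)
    (re_sq_add_im_sq w'.norm_coe) (Prod.ext (mul_left_cancel₀ hv ha) (mul_left_cancel₀ hv hb))
  exact Prod.ext rfl (Circle.ext (Complex.ext hxy.1 hxy.2))

lemma exists_torusPentagon_eq {P : Fin 5 → ℂ} (hP : P ∈ pentagonSlice) :
    ∃ p : Circle × Circle, torusPentagon p.1 p.2 = P := by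
  obtain ⟨a, b, u, ha, hb, hu, h4, rfl⟩ := mem_pentagonSlice_iff.1 hP
  have hv : ‖(2 + u) / ‖2 + u‖‖ = 1 := norm_div_norm_two_add hu
  have hv0 : (2 + u) / ‖2 + u‖ ≠ 0 := norm_ne_zero_iff.1 (by rw [hv]; exact one_ne_zero)
  obtain ⟨x, y, hxy, hfib⟩ := exists_fiberPoint_eq (r := ‖2 + u‖) (A := a / ((2 + u) / ‖2 + u‖))
    (B := b / ((2 + u) / ‖2 + u‖)) (by linarith [one_le_norm_two_add hu])
    (by rw [norm_div, ha, hv, div_one]) (by rw [norm_div, hb, hv, div_one])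
    (by rw [← one_mul ‖_‖, ← hv, ← norm_mul, ← one_add_mul_add_mul_add_half hu,
      mul_div_cancel₀ a hv0, mul_div_cancel₀ b hv0, h4])
  have hw : ‖(⟨x, y⟩ : ℂ)‖ = 1 := by rw [norm_eq_sqrt_sq_add_sq, hxy, Real.sqrt_one]
  refine ⟨(⟨u, by simpa [Submonoid.unitSphere] using hu⟩,
    ⟨⟨x, y⟩, by simpa [Submonoid.unitSphere] using hw⟩), ?_⟩
  show pentagon ((2 + u) / ‖2 + u‖ * (fiberPoint ‖2 + u‖ x y).1)
    ((2 + u) / ‖2 + u‖ * (fiberPoint ‖2 + u‖ x y).2) u = pentagon a b u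
  rw [hfib, mul_div_cancel₀ a hv0, mul_div_cancel₀ b hv0]

lemma continuous_torusPentagon :
    Continuous fun p : Circle × Circle => torusPentagon p.1 p.2 := by
  have hρ : ∀ p : Circle × Circle, 0 < fiberRadius ‖2 + (p.1 : ℂ)‖ (p.2 : ℂ).im :=
    fun p => fiberRadius_pos (norm_nonneg _)
  have hρc : Continuous fun p : Circle × Circle => fiberRadius ‖2 + (p.1 : ℂ)‖ (p.2 : ℂ).im := by
    unfold fiberRadius; fun_prop
  have hk : Continuous fun p : Circle × Circle => fiberCoeff ‖2 + (p.1 : ℂ)‖ (p.2 : ℂ).im := by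
    unfold fiberCoeff
    fun_prop (disch := intro p; have := hρ p; positivity)
  have hfib : Continuous fun p : Circle × Circle =>
      fiberPoint ‖2 + (p.1 : ℂ)‖ (p.2 : ℂ).re (p.2 : ℂ).im := by
    unfold fiberPoint arcPoint
    fun_prop (disch := intro p; simp [(hρ p).ne'])
  have hv : Continuous fun p : Circle × Circle => (2 + (p.1 : ℂ)) / ‖2 + (p.1 : ℂ)‖ := by
    fun_prop (disch := intro p; simp [two_add_ne_zero (Circle.norm_coe p.1)])
  have hpent : Continuous fun q : ℂ × ℂ × ℂ => pentagon q.1 q.2.1 q.2.2 := by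
    refine continuous_pi fun i => ?_
    fin_cases i <;> simp only [pentagon] <;> fun_prop
  exact hpent.comp ((hv.mul hfib.fst).prodMk ((hv.mul hfib.snd).prodMk (by fun_prop)))

end torus

end

/-- For the pentagonal linkage `l = (1, 1, 1, 1/2, 2)`, the moduli space
`M(l)`, realized as the slice
`S(l) = { P : Fin 5 → ℂ | P 0 = 0, P 1 = (1, 0), dist (P i) (P (i+1)) = l i for all i }`
(the plane `ℝ²` modeled as `ℂ`, indices cyclic mod 5), is homeomorphic to the 2-torus
`Circle × Circle`. -/
theorem pentagon_torus_moduli_space_homeomorphic_torus :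
    Nonempty
      ({P : Fin 5 → ℂ // P 0 = 0 ∧ P 1 = 1 ∧
          ∀ i, dist (P i) (P (i + 1)) = ![1, 1, 1, 1/2, 2] i} ≃ₜ
        (Circle × Circle)) := by
  let f : Circle × Circle → pentagonSlice := fun p =>
    ⟨torusPentagon p.1 p.2, torusPentagon_mem p.1.norm_coe p.2.norm_coe⟩
  have hf : Function.Bijective f :=
    ⟨fun p q h => torusPentagon_injective (congrArg Subtype.val h),
      fun P => (exists_torusPentagon_eq P.2).imp fun _ h => Subtype.ext h⟩
  have hcont : Continuous (Equiv.ofBijective f hf) :=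
    continuous_torusPentagon.subtype_mk _
  exact ⟨hcont.homeoOfEquivCompactToT2.symm⟩
end

section
/- Let n ≥ 1 and let Π_n ⊆ (Fin n → ℝ) be the convex hull of the set V_n = { x | x i = σ(i) + 1 as a real number, for some permutation σ of Fin n } of all points obtained by permuting the coordinates of (1, 2, …, n). Then the set of extreme points of Π_n equals V_n, and V_n has cardinality n!. -/
/-!
Every vertex `(σ(1), …, σ(n))` has the same value `∑ k²` of the strictly convex function
`x ↦ ∑ xᵢ²`, so this value bounds that function on the hull. A point of a convex set at which a
strictly convex function attains its maximum cannot lie inside a nondegenerate segment of the set,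
so every vertex is extreme. The count `n!` holds because distinct permutations give distinct
vertices.
-/

/-- The vertex set of the permutohedron `Π_n`: all points of `ℝⁿ` (modeled as
`Fin n → ℝ`) obtained by permuting the coordinates of the point `(1, 2, …, n)`. -/
def permutohedronVertices (n : ℕ) : Set (Fin n → ℝ) :=
  {x | ∃ σ : Equiv.Perm (Fin n), x = fun i => ((σ i : ℕ) : ℝ) + 1}

open Set

theorem StrictConvexOn.mem_extremePoints_of_isMaxOn {𝕜 E β : Type*} [Field 𝕜] [LinearOrder 𝕜]
    [IsStrictOrderedRing 𝕜] [AddCommGroup E] [Module 𝕜 E] [AddCommGroup β] [PartialOrder β]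
    [IsOrderedAddMonoid β] [Module 𝕜 β] [PosSMulMono 𝕜 β]
    {s : Set E} {f : E → β} {x : E}
    (hf : StrictConvexOn 𝕜 s f) (hx : x ∈ s) (hmax : IsMaxOn f s x) :
    x ∈ s.extremePoints 𝕜 := by
  refine ⟨hx, fun x₁ hx₁ x₂ hx₂ hseg => ?_⟩
  by_cases h : x₁ = x₂
  · subst h
    rw [openSegment_same] at hseg
    exact hseg.symm
  · obtain ⟨a, b, ha, hb, hab, rfl⟩ := hseg
    have hlt := hf.2 hx₁ hx₂ h ha hb hab
    have hle : a • f x₁ + b • f x₂ ≤ a • f (a • x₁ + b • x₂) + b • f (a • x₁ + b • x₂) := by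
      gcongr
      exacts [hmax hx₁, hmax hx₂]
    rw [← add_smul, hab, one_smul] at hle
    exact absurd (hlt.trans_le hle) (lt_irrefl _)

theorem extremePoints_convexHull_eq_of_strictConvexOn {E : Type*} [AddCommGroup E] [Module ℝ E]
    {A : Set E} {f : E → ℝ} {c : ℝ} (hf : StrictConvexOn ℝ univ f) (hA : ∀ x ∈ A, f x = c) :
    (convexHull ℝ A).extremePoints ℝ = A := by
  refine extremePoints_convexHull_subset.antisymm fun x hx => ?_
  have hhull : convexHull ℝ A ⊆ {y | y ∈ univ ∧ f y ≤ c} :=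
    convexHull_min (fun y hy => ⟨trivial, (hA y hy).le⟩) (hf.convexOn.convex_le c)
  refine (hf.subset (subset_univ _) (convex_convexHull ℝ A)).mem_extremePoints_of_isMaxOn
    (subset_convexHull ℝ A hx) fun y hy => ?_
  rw [mem_ofPred_eq, hA x hx]
  exact (hhull hy).2

theorem StrictConvexOn.sum_apply {ι : Type*} [Fintype ι] {g : ℝ → ℝ}
    (hg : StrictConvexOn ℝ univ g) : StrictConvexOn ℝ univ fun z : ι → ℝ => ∑ i, g (z i) := by
  refine ⟨convex_univ, fun x _ y _ hxy a b ha hb hab => ?_⟩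
  obtain ⟨i, hi⟩ := Function.ne_iff.mp hxy
  simp only [Pi.add_apply, Pi.smul_apply, Finset.smul_sum, ← Finset.sum_add_distrib]
  exact Finset.sum_lt_sum (fun j _ => hg.convexOn.2 trivial trivial ha.le hb.le hab)
    ⟨i, Finset.mem_univ i, hg.2 trivial trivial hi ha hb hab⟩

theorem sum_sq_of_mem_permutohedronVertices {n : ℕ} {x : Fin n → ℝ}
    (hx : x ∈ permutohedronVertices n) : ∑ i, x i ^ 2 = ∑ i : Fin n, ((i : ℕ) + 1 : ℝ) ^ 2 := by
  obtain ⟨σ, rfl⟩ := hx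
  exact Equiv.sum_comp σ fun j : Fin n => ((j : ℕ) + 1 : ℝ) ^ 2

theorem permutohedronVertices_eq_range (n : ℕ) :
    permutohedronVertices n = range fun σ : Equiv.Perm (Fin n) => fun i => ((σ i : ℕ) : ℝ) + 1 := by
  ext x
  exact exists_congr fun σ => eq_comm

theorem injective_perm_apply_add_one (n : ℕ) :
    Function.Injective fun σ : Equiv.Perm (Fin n) => fun i => ((σ i : ℕ) : ℝ) + 1 := by
  intro σ τ h
  ext i
  simpa using congrFun h i

theorem permutohedron_extremePoints_eq_vertices_and_card_general
    (n : ℕ) :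
    Set.extremePoints ℝ (convexHull ℝ (permutohedronVertices n)) =
      permutohedronVertices n ∧
    (permutohedronVertices n).ncard = n.factorial := by
  refine ⟨extremePoints_convexHull_eq_of_strictConvexOn
    ((Even.strictConvexOn_pow even_two two_ne_zero).sum_apply)
    fun x hx => sum_sq_of_mem_permutohedronVertices hx, ?_⟩
  rw [permutohedronVertices_eq_range, ncard_range_of_injective (injective_perm_apply_add_one n),
    Nat.card_perm, Nat.card_eq_fintype_card, Fintype.card_fin]

/-- For `n ≥ 1`, the set of extreme points of the permutohedron
`Π_n = convexHull ℝ V_n` (where `V_n` is the set of coordinate permutations of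
`(1, 2, …, n)`) is exactly `V_n`, and `V_n` has cardinality `n!`. -/
theorem permutohedron_extremePoints_eq_vertices_and_card
    (n : ℕ) (hn : 1 ≤ n) :
    Set.extremePoints ℝ (convexHull ℝ (permutohedronVertices n)) =
      permutohedronVertices n ∧
    (permutohedronVertices n).ncard = n.factorial :=
  permutohedron_extremePoints_eq_vertices_and_card_general n
end

section
/- Let n ≥ 2, let Π_n ⊆ (Fin n → ℝ) be the permutohedron (convex hull of the coordinate permutations V_n of (1, 2, …, n)), and let S be a nonempty proper subset of Fin n with |S| = s. Consider the linear functional f(x) = ∑_{i ∈ S} x i. Then the maximum of f on Π_n equals ∑_{k = n−s+1}^{n} k, and the exposed face F_S = { x ∈ Π_n | f(x) = max } equals the convex hull of those points of V_n whose coordinates indexed by S take exactly the values {n−s+1, …, n}. In particular F_S is a nonempty proper exposed face of Π_n. -/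
/-- The permutohedron `Π_n`, the convex hull of the coordinate permutations of
`(1, 2, …, n)`. -/
def permutohedron (n : ℕ) : Set (Fin n → ℝ) :=
  convexHull ℝ (permutohedronVertices n)

open Finset

section ConvexFace

variable {E : Type*} [AddCommGroup E] [Module ℝ E]

theorem IsGreatest.image_convexHull {V : Set E} {f : E →ₗ[ℝ] ℝ} {M : ℝ}
    (h : IsGreatest (f '' V) M) : IsGreatest (f '' convexHull ℝ V) M := by
  refine ⟨Set.image_mono (subset_convexHull ℝ V) h.1, ?_⟩
  rintro _ ⟨x, hx, rfl⟩
  exact convexHull_min (fun v hv => h.2 ⟨v, hv, rfl⟩) (convex_halfSpace_le f.isLinear M) hx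

theorem sep_convexHull_eq_convexHull_sep {V : Set E} {f : E →ₗ[ℝ] ℝ} {M : ℝ}
    (hV : ∀ v ∈ V, f v ≤ M) :
    {x ∈ convexHull ℝ V | f x = M} = convexHull ℝ {v ∈ V | f v = M} := by
  refine subset_antisymm ?_ fun x hx =>
    ⟨convexHull_mono (Set.sep_subset _ _) hx,
      convexHull_min (fun v hv => hv.2) (convex_hyperplane f.isLinear M) hx⟩
  rintro _ ⟨hx, hfx⟩
  obtain ⟨ι, t, w, z, hw₀, hw₁, hz, rfl⟩ := (convexHull_eq V).subset hx
  have hgap_nonneg : ∀ i ∈ t, 0 ≤ w i * (M - f (z i)) := fun i hi =>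
    mul_nonneg (hw₀ i hi) (sub_nonneg.2 (hV _ (hz i hi)))
  have hgap_sum : ∑ i ∈ t, w i * (M - f (z i)) = 0 := by
    rw [t.centerMass_eq_of_sum_1 _ hw₁, map_sum] at hfx
    simp only [map_smul, smul_eq_mul] at hfx
    simp only [mul_sub, sum_sub_distrib, ← sum_mul, hw₁, one_mul, hfx, sub_self]
  have hmax : ∀ i ∈ t, w i ≠ 0 → f (z i) = M := fun i hi hwi => by
    have := (sum_eq_zero_iff_of_nonneg hgap_nonneg).1 hgap_sum i hi
    linarith [(mul_eq_zero.1 this).resolve_left hwi]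
  rw [← t.centerMass_filter_ne_zero]
  refine (t.filter (w · ≠ 0)).centerMass_mem_convexHull (fun i hi => hw₀ i (mem_filter.1 hi).1)
    (by rw [sum_filter_ne_zero, hw₁]; exact one_pos) fun i hi => ?_
  obtain ⟨hit, hwi⟩ := mem_filter.1 hi
  exact ⟨hz i hit, hmax i hit hwi⟩

theorem isExposed_sep_eq_of_isGreatest [TopologicalSpace E] {A : Set E} {l : E →L[ℝ] ℝ} {M : ℝ}
    (h : IsGreatest (l '' A) M) : IsExposed ℝ A {x ∈ A | l x = M} := fun _ => by
  refine ⟨l, Set.sep_ext_iff.2 fun x hx => ⟨fun hlx y hy => hlx ▸ h.2 ⟨y, hy, rfl⟩, fun hmax => ?_⟩⟩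
  obtain ⟨x₀, hx₀, hlx₀⟩ := h.1
  exact le_antisymm (h.2 ⟨x, hx, rfl⟩) (hlx₀ ▸ hmax x₀ hx₀)

end ConvexFace

namespace Finset

/-- Exchange argument: the elements of `T` outside `Icc (n - #T + 1) n` are all smaller than
the elements of `Icc (n - #T + 1) n` missing from `T`, and there are equally many of each. -/
theorem sum_lt_sum_Icc_of_ne {n : ℕ} {T : Finset ℕ} (hT : ∀ j ∈ T, j ≤ n) (hTn : #T ≤ n)
    (hne : T ≠ Icc (n - #T + 1) n) : ∑ j ∈ T, j < ∑ j ∈ Icc (n - #T + 1) n, j := by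
  set K := Icc (n - #T + 1) n
  have hK : #K = #T := by simp only [K, Nat.card_Icc]; omega
  have hTK : (T \ K).Nonempty := sdiff_nonempty.2 fun h => hne (eq_of_subset_of_card_le h hK.le)
  calc ∑ j ∈ T, j
      ≤ ∑ j ∈ T ∩ K, j + #(T \ K) • (n - #T) := by
        rw [← sum_inter_add_sum_sdiff T K]
        gcongr
        refine sum_le_card_nsmul _ _ _ fun j hj => ?_
        have := hT j (mem_sdiff.1 hj).1
        simp only [K, mem_sdiff, mem_Icc] at hj
        omega
    _ < ∑ j ∈ K ∩ T, j + #(K \ T) • (n - #T + 1) := by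
        have hKT : 0 < #(K \ T) := card_sdiff_comm hK.symm ▸ hTK.card_pos
        rw [inter_comm, card_sdiff_comm hK.symm, smul_eq_mul, smul_eq_mul]
        gcongr
        omega
    _ ≤ ∑ j ∈ K, j := by
        rw [← sum_inter_add_sum_sdiff K T]
        gcongr
        exact card_nsmul_le_sum _ _ _ fun j hj => (mem_Icc.1 (mem_sdiff.1 hj).1).1

theorem sum_eq_sum_Icc_iff {n : ℕ} {T : Finset ℕ} (hT : ∀ j ∈ T, j ≤ n) (hTn : #T ≤ n) :
    ∑ j ∈ T, j = ∑ j ∈ Icc (n - #T + 1) n, j ↔ T = Icc (n - #T + 1) n :=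
  ⟨fun h => by_contra fun hK => (sum_lt_sum_Icc_of_ne hT hTn hK).ne h, fun h => h ▸ rfl⟩

theorem sum_le_sum_Icc {n : ℕ} {T : Finset ℕ} (hT : ∀ j ∈ T, j ≤ n) (hTn : #T ≤ n) :
    ∑ j ∈ T, j ≤ ∑ j ∈ Icc (n - #T + 1) n, j := by
  by_cases hK : T = Icc (n - #T + 1) n
  · exact ((sum_eq_sum_Icc_iff hT hTn).2 hK).le
  · exact (sum_lt_sum_Icc_of_ne hT hTn hK).le

end Finset

section Permutohedron

variable {n : ℕ}

theorem perm_val_add_one_injective (σ : Equiv.Perm (Fin n)) :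
    Function.Injective fun i => (σ i : ℕ) + 1 :=
  fun a b h => σ.injective (Fin.ext (by simpa using h))

theorem card_image_perm_add_one (σ : Equiv.Perm (Fin n)) (S : Finset (Fin n)) :
    #(S.image fun i => (σ i : ℕ) + 1) = #S :=
  card_image_of_injective _ (perm_val_add_one_injective σ)

theorem image_perm_add_one (σ : Equiv.Perm (Fin n)) (S : Finset (Fin n)) :
    (fun i => ((σ i : ℕ) : ℝ) + 1) '' S =
      (fun k : ℕ => (k : ℝ)) '' ↑(S.image fun i => (σ i : ℕ) + 1) := by
  rw [coe_image, ← Set.image_comp]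
  exact Set.image_congr fun i _ => by simp

theorem exists_finset_of_mem_permutohedronVertices {x : Fin n → ℝ}
    (hx : x ∈ permutohedronVertices n) (S : Finset (Fin n)) :
    ∃ T : Finset ℕ, #T = #S ∧ (∀ j ∈ T, j ≤ n) ∧
      ∑ i ∈ S, x i = ∑ j ∈ T, (j : ℝ) ∧ x '' S = (fun k : ℕ => (k : ℝ)) '' (T : Set ℕ) := by
  obtain ⟨σ, rfl⟩ := hx
  refine ⟨_, card_image_perm_add_one σ S, ?_, ?_, image_perm_add_one σ S⟩
  · simp only [mem_image]
    rintro _ ⟨i, -, rfl⟩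
    exact (σ i).isLt
  · rw [sum_image (perm_val_add_one_injective σ).injOn]
    push_cast
    rfl

theorem sum_le_of_mem_permutohedronVertices {x : Fin n → ℝ}
    (hx : x ∈ permutohedronVertices n) (S : Finset (Fin n)) :
    ∑ i ∈ S, x i ≤ ∑ k ∈ Icc (n - #S + 1) n, (k : ℝ) := by
  obtain ⟨T, hcard, hTn, hsum, -⟩ := exists_finset_of_mem_permutohedronVertices hx S
  have hTn' : #T ≤ n := hcard ▸ S.card_le_univ.trans_eq (Fintype.card_fin n)
  rw [hsum, ← hcard, ← Nat.cast_sum, ← Nat.cast_sum, Nat.cast_le]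
  exact sum_le_sum_Icc hTn hTn'

theorem sum_eq_iff_image_eq_of_mem_permutohedronVertices {x : Fin n → ℝ}
    (hx : x ∈ permutohedronVertices n) (S : Finset (Fin n)) :
    ∑ i ∈ S, x i = ∑ k ∈ Icc (n - #S + 1) n, (k : ℝ) ↔
      x '' S = (fun k : ℕ => (k : ℝ)) '' ↑(Icc (n - #S + 1) n) := by
  obtain ⟨T, hcard, hTn, hsum, himage⟩ := exists_finset_of_mem_permutohedronVertices hx S
  have hTn' : #T ≤ n := hcard ▸ S.card_le_univ.trans_eq (Fintype.card_fin n)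
  rw [hsum, himage, ← hcard, (Set.image_injective.2 Nat.cast_injective).eq_iff, coe_inj,
    ← sum_eq_sum_Icc_iff hTn hTn', ← Nat.cast_sum, ← Nat.cast_sum, Nat.cast_inj]

theorem exists_mem_permutohedronVertices_image_eq_Icc (S : Finset (Fin n)) :
    ∃ x ∈ permutohedronVertices n, x '' S = (fun k : ℕ => (k : ℝ)) '' ↑(Icc (n - #S + 1) n) := by
  have hSn : #S ≤ n := S.card_le_univ.trans_eq (Fintype.card_fin n)
  obtain ⟨σ, hσ⟩ := Equiv.Perm.exists_map_finset_eq S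
    ((Ico (n - #S) n).attachFin fun m hm => (mem_Ico.1 hm).2)
    (by simp; omega)
  have hσS : ∀ i ∈ S, n - #S ≤ (σ i : ℕ) := fun i hi => by
    have := mem_map_of_mem σ.toEmbedding hi
    rw [hσ, mem_attachFin, mem_Ico] at this
    exact this.1
  have htop : S.image (fun i => (σ i : ℕ) + 1) = Icc (n - #S + 1) n := by
    refine eq_of_subset_of_card_le (fun j hj => ?_) (by simp [card_image_perm_add_one]; omega)
    obtain ⟨i, hi, rfl⟩ := mem_image.1 hj
    have := (σ i).isLt
    have := hσS i hi
    rw [mem_Icc]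
    omega
  exact ⟨_, ⟨σ, rfl⟩, htop ▸ image_perm_add_one σ S⟩

theorem exists_mem_permutohedronVertices_image_ne_Icc {S : Finset (Fin n)} (hS : S.Nonempty)
    (hSn : #S < n) :
    ∃ x ∈ permutohedronVertices n, x '' S ≠ (fun k : ℕ => (k : ℝ)) '' ↑(Icc (n - #S + 1) n) := by
  obtain ⟨i₀, hi₀⟩ := hS
  refine ⟨_, ⟨Equiv.swap ⟨0, i₀.pos⟩ i₀, rfl⟩, fun himage => ?_⟩
  obtain ⟨k, hk, hk1⟩ : (1 : ℝ) ∈ (fun k : ℕ => (k : ℝ)) '' ↑(Icc (n - #S + 1) n) :=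
    himage ▸ ⟨i₀, hi₀, by simp⟩
  rw [Nat.cast_eq_one.1 hk1, coe_Icc, Set.mem_Icc] at hk
  omega

end Permutohedron

theorem permutohedron_facet_description_general
    (n : ℕ) (S : Finset (Fin n)) (hS : S.Nonempty)
    (hSu : S ≠ Finset.univ) :
    IsGreatest ((fun x => ∑ i ∈ S, x i) '' permutohedron n)
      (∑ k ∈ Finset.Icc (n - S.card + 1) n, (k : ℝ)) ∧
    {x ∈ permutohedron n |
        ∑ i ∈ S, x i = ∑ k ∈ Finset.Icc (n - S.card + 1) n, (k : ℝ)} =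
      convexHull ℝ {x ∈ permutohedronVertices n |
        x '' ↑S = (fun k : ℕ => (k : ℝ)) '' ↑(Finset.Icc (n - S.card + 1) n)} ∧
    IsExposed ℝ (permutohedron n)
      {x ∈ permutohedron n |
        ∑ i ∈ S, x i = ∑ k ∈ Finset.Icc (n - S.card + 1) n, (k : ℝ)} ∧
    {x ∈ permutohedron n |
        ∑ i ∈ S, x i = ∑ k ∈ Finset.Icc (n - S.card + 1) n, (k : ℝ)}.Nonempty ∧
    {x ∈ permutohedron n |
        ∑ i ∈ S, x i = ∑ k ∈ Finset.Icc (n - S.card + 1) n, (k : ℝ)} ≠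
      permutohedron n := by
  set M := ∑ k ∈ Icc (n - #S + 1) n, (k : ℝ)
  set l : (Fin n → ℝ) →L[ℝ] ℝ := ∑ i ∈ S, ContinuousLinearMap.proj i
  have hl : ∀ x, ∑ i ∈ S, x i = l x := by simp [l]
  simp only [hl]
  have hface_vertex : ∀ x ∈ permutohedronVertices n,
      l x = M ↔ x '' S = (fun k : ℕ => (k : ℝ)) '' ↑(Icc (n - #S + 1) n) := fun x hx => by
    rw [← hl]; exact sum_eq_iff_image_eq_of_mem_permutohedronVertices hx S
  obtain ⟨x₀, hx₀, himage₀⟩ := exists_mem_permutohedronVertices_image_eq_Icc S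
  have hvertex : IsGreatest (l '' permutohedronVertices n) M :=
    ⟨⟨x₀, hx₀, (hface_vertex x₀ hx₀).2 himage₀⟩, by
      rintro _ ⟨x, hx, rfl⟩; rw [← hl]; exact sum_le_of_mem_permutohedronVertices hx S⟩
  have hmax : IsGreatest (l '' permutohedron n) M := hvertex.image_convexHull (f := l.toLinearMap)
  refine ⟨hmax, ?_, isExposed_sep_eq_of_isGreatest hmax,
    ⟨x₀, subset_convexHull ℝ _ hx₀, (hface_vertex x₀ hx₀).2 himage₀⟩, fun hface => ?_⟩
  · rw [← Set.sep_ext_iff.2 hface_vertex]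
    exact sep_convexHull_eq_convexHull_sep (f := l.toLinearMap) fun v hv => hvertex.2 ⟨v, hv, rfl⟩
  · obtain ⟨x₁, hx₁, himage₁⟩ :=
      exists_mem_permutohedronVertices_image_ne_Icc hS (by simpa using S.card_lt_iff_ne_univ.2 hSu)
    have hx₁P : x₁ ∈ permutohedron n := subset_convexHull ℝ _ hx₁
    rw [← hface] at hx₁P
    exact himage₁ ((hface_vertex x₁ hx₁).1 hx₁P.2)

/-- Let `n ≥ 2` and let `S` be a nonempty proper subset of `Fin n` with
`s = |S|`.  For the linear functional `f(x) = ∑_{i ∈ S} x i`: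
* the maximum of `f` on `Π_n` equals `∑_{k = n−s+1}^{n} k`;
* the exposed face `F_S = { x ∈ Π_n | f x = max }` equals the convex hull of those
  vertices of `Π_n` whose coordinates indexed by `S` take exactly the values
  `{n−s+1, …, n}`;
* `F_S` is a nonempty proper exposed face of `Π_n`. -/
theorem permutohedron_facet_description
    (n : ℕ) (hn : 2 ≤ n) (S : Finset (Fin n)) (hS : S.Nonempty)
    (hSu : S ≠ Finset.univ) :
    IsGreatest ((fun x => ∑ i ∈ S, x i) '' permutohedron n)
      (∑ k ∈ Finset.Icc (n - S.card + 1) n, (k : ℝ)) ∧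
    {x ∈ permutohedron n |
        ∑ i ∈ S, x i = ∑ k ∈ Finset.Icc (n - S.card + 1) n, (k : ℝ)} =
      convexHull ℝ {x ∈ permutohedronVertices n |
        x '' ↑S = (fun k : ℕ => (k : ℝ)) '' ↑(Finset.Icc (n - S.card + 1) n)} ∧
    IsExposed ℝ (permutohedron n)
      {x ∈ permutohedron n |
        ∑ i ∈ S, x i = ∑ k ∈ Finset.Icc (n - S.card + 1) n, (k : ℝ)} ∧
    {x ∈ permutohedron n |
        ∑ i ∈ S, x i = ∑ k ∈ Finset.Icc (n - S.card + 1) n, (k : ℝ)}.Nonempty ∧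
    {x ∈ permutohedron n |
        ∑ i ∈ S, x i = ∑ k ∈ Finset.Icc (n - S.card + 1) n, (k : ℝ)} ≠
      permutohedron n :=
  permutohedron_facet_description_general n S hS hSu
end
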